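/- arXiv:2105.08366 — 9 statements merged into one kernel-verified Lean document; each statement's English description precedes it below -/
import Mathlib

section
/- For all x ∈ ℝ and ρ > 0, the partial derivative of H with respect to x satisfies |∂H/∂x (x, ρ)| ≤ π · min(1/ρ², π/(2ρ)), where H(x, ρ) = (1/π) ∫₀^π cos(x(θ + sin θ))/(ρ² + sin²θ) dθ. -/
/-!
Since `cos` is 1-Lipschitz and `0 ≤ θ + sin θ ≤ π` on `[0, π]`, the map `y ↦ H(y, ρ)` is Lipschitz
with constant `I(ρ) = ∫₀^π dθ / (ρ² + sin² θ)`, which bounds `|∂H/∂x|` without computing the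
derivative. Trivially `I(ρ) ≤ π / ρ²`; folding `[0, π]` onto `[0, π/2]` and using Jordan's
inequality `sin θ ≥ 2θ/π` compares `I(ρ)` with an arctangent integral, giving `I(ρ) ≤ π² / (2ρ)`.
-/

open Real Set MeasureTheory intervalIntegral

theorem add_sin_le_pi {θ : ℝ} (h : θ ≤ π) : θ + sin θ ≤ π := by
  have := sin_le (sub_nonneg.2 h)
  rw [sin_pi_sub] at this
  linarith

theorem abs_add_sin_le_pi {θ : ℝ} (h : |θ| ≤ π) : |θ + sin θ| ≤ π := by
  rw [abs_le] at h ⊢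
  have := add_sin_le_pi (θ := -θ) (by linarith)
  rw [sin_neg] at this
  constructor <;> linarith [add_sin_le_pi h.2]

theorem abs_integral_cos_mul_sub_le {φ g : ℝ → ℝ} {a b M : ℝ} (hab : a ≤ b)
    (hφ : ContinuousOn φ (Icc a b)) (hg : IntervalIntegrable g volume a b)
    (hφM : ∀ θ ∈ Icc a b, |φ θ| ≤ M) (hg0 : ∀ θ ∈ Icc a b, 0 ≤ g θ) (y z : ℝ) :
    |(∫ θ in a..b, cos (y * φ θ) * g θ) - ∫ θ in a..b, cos (z * φ θ) * g θ| ≤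
      M * (∫ θ in a..b, g θ) * |y - z| := by
  have hφ' : ContinuousOn φ (uIcc a b) := by rwa [uIcc_of_le hab]
  have hint : ∀ c : ℝ, IntervalIntegrable (fun θ => cos (c * φ θ) * g θ) volume a b := fun c =>
    hg.continuousOn_mul (continuous_cos.comp_continuousOn (hφ'.const_smul c))
  calc |(∫ θ in a..b, cos (y * φ θ) * g θ) - ∫ θ in a..b, cos (z * φ θ) * g θ|
      = ‖∫ θ in a..b, (cos (y * φ θ) - cos (z * φ θ)) * g θ‖ := by
        simp only [sub_mul, integral_sub (hint y) (hint z), Real.norm_eq_abs]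
    _ ≤ ∫ θ in a..b, M * |y - z| * g θ := by
        refine norm_integral_le_of_norm_le hab (Filter.Eventually.of_forall fun θ hθ => ?_)
          (hg.const_mul _)
        have hθ : θ ∈ Icc a b := Ioc_subset_Icc_self hθ
        rw [Real.norm_eq_abs, abs_mul, abs_of_nonneg (hg0 θ hθ)]
        gcongr
        · exact hg0 θ hθ
        calc |cos (y * φ θ) - cos (z * φ θ)| ≤ |y * φ θ - z * φ θ| := abs_cos_sub_cos_le _ _
          _ = |φ θ| * |y - z| := by rw [← sub_mul, abs_mul, mul_comm]
          _ ≤ M * |y - z| := by gcongr; exact hφM θ hθ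
    _ = M * (∫ θ in a..b, g θ) * |y - z| := by
        rw [intervalIntegral.integral_const_mul]; ring

theorem abs_deriv_integral_cos_mul_le {φ g : ℝ → ℝ} {a b M : ℝ} (hab : a ≤ b)
    (hφ : ContinuousOn φ (Icc a b)) (hg : IntervalIntegrable g volume a b)
    (hφM : ∀ θ ∈ Icc a b, |φ θ| ≤ M) (hg0 : ∀ θ ∈ Icc a b, 0 ≤ g θ) (x : ℝ) :
    |deriv (fun y => ∫ θ in a..b, cos (y * φ θ) * g θ) x| ≤ M * ∫ θ in a..b, g θ := by
  have hM : 0 ≤ M := (abs_nonneg _).trans (hφM a (left_mem_Icc.2 hab))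
  have hI : 0 ≤ ∫ θ in a..b, g θ := integral_nonneg hab hg0
  refine norm_deriv_le_of_lip' (f := fun y => ∫ θ in a..b, cos (y * φ θ) * g θ) (mul_nonneg hM hI)
    (Filter.Eventually.of_forall fun y => ?_)
  simpa only [Real.norm_eq_abs] using abs_integral_cos_mul_sub_le hab hφ hg hφM hg0 y x

theorem integral_comp_sin_eq_two_mul {f : ℝ → ℝ} (hf : Continuous f) :
    ∫ θ in 0..π, f (sin θ) = 2 * ∫ θ in 0..π / 2, f (sin θ) := by
  have hint : ∀ a b : ℝ, IntervalIntegrable (fun θ => f (sin θ)) volume a b := fun a b =>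
    (hf.comp continuous_sin).intervalIntegrable a b
  have hreflect : ∫ θ in π / 2..π, f (sin θ) = ∫ θ in 0..π / 2, f (sin θ) := by
    simpa [sin_pi_sub, show π - π / 2 = π / 2 by ring] using
      (integral_comp_sub_left (fun θ => f (sin θ)) π (a := 0) (b := π / 2)).symm
  rw [← integral_add_adjacent_intervals (hint 0 (π / 2)) (hint (π / 2) π), hreflect, two_mul]

theorem continuous_inv_sq_add_sq_comp {ρ : ℝ} (hρ : ρ ≠ 0) {f : ℝ → ℝ} (hf : Continuous f) :
    Continuous fun θ => (ρ ^ 2 + f θ ^ 2)⁻¹ :=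
  (continuous_const.add (hf.pow 2)).inv₀ fun _ =>
    (add_pos_of_pos_of_nonneg (pow_two_pos_of_ne_zero hρ) (sq_nonneg _)).ne'

theorem integral_inv_sq_add_sin_sq_le_pi_div_sq {ρ : ℝ} (hρ : ρ ≠ 0) :
    ∫ θ in 0..π, (ρ ^ 2 + sin θ ^ 2)⁻¹ ≤ π / ρ ^ 2 := by
  calc ∫ θ in 0..π, (ρ ^ 2 + sin θ ^ 2)⁻¹ ≤ ∫ _ in 0..π, (ρ ^ 2)⁻¹ := by
        refine integral_mono_on pi_pos.le
          ((continuous_inv_sq_add_sq_comp hρ continuous_sin).intervalIntegrable _ _)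
          intervalIntegrable_const fun _ _ => ?_
        gcongr
        exact le_add_of_nonneg_right (sq_nonneg _)
    _ = π / ρ ^ 2 := by simp [div_eq_mul_inv]

theorem integral_inv_sq_add_sin_sq_le_pi_sq_div {ρ : ℝ} (hρ : 0 < ρ) :
    ∫ θ in 0..π, (ρ ^ 2 + sin θ ^ 2)⁻¹ ≤ π ^ 2 / (2 * ρ) := by
  have hπ : 0 < π := pi_pos
  have hscale : ∫ θ in 0..π / 2, (ρ ^ 2 + (2 / π * θ) ^ 2)⁻¹ =
      π / 2 * ∫ u in 0..1, (ρ ^ 2 + u ^ 2)⁻¹ := by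
    have hend : 2 / π * (π / 2) = 1 := by field_simp
    rw [integral_comp_mul_left (fun u => (ρ ^ 2 + u ^ 2)⁻¹) (by positivity), hend, mul_zero,
      smul_eq_mul, inv_div]
  calc ∫ θ in 0..π, (ρ ^ 2 + sin θ ^ 2)⁻¹ = 2 * ∫ θ in 0..π / 2, (ρ ^ 2 + sin θ ^ 2)⁻¹ :=
        integral_comp_sin_eq_two_mul (f := fun s => (ρ ^ 2 + s ^ 2)⁻¹)
          (continuous_inv_sq_add_sq_comp hρ.ne' continuous_id)
    _ ≤ 2 * ∫ θ in 0..π / 2, (ρ ^ 2 + (2 / π * θ) ^ 2)⁻¹ := by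
        gcongr
        refine integral_mono_on (by positivity)
          ((continuous_inv_sq_add_sq_comp hρ.ne' continuous_sin).intervalIntegrable _ _)
          ((continuous_inv_sq_add_sq_comp hρ.ne' (continuous_const_mul _)).intervalIntegrable _ _)
          fun θ hθ => ?_
        gcongr
        · exact mul_nonneg (by positivity) hθ.1
        · exact mul_le_sin hθ.1 hθ.2
    _ = π * (ρ⁻¹ * arctan (1 / ρ)) := by
        rw [hscale, integral_inv_sq_add_sq hρ.ne', zero_div, arctan_zero, sub_zero]
        ring
    _ ≤ π * (ρ⁻¹ * (π / 2)) := by gcongr; exact (arctan_lt_pi_div_two _).le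
    _ = π ^ 2 / (2 * ρ) := by field_simp

theorem good_H_deriv_x_bound (x ρ : ℝ) (hρ : 0 < ρ) :
    |deriv (fun y : ℝ =>
        (1 / π) * ∫ θ in (0:ℝ)..π, Real.cos (y * (θ + Real.sin θ)) / (ρ ^ 2 + Real.sin θ ^ 2)) x| ≤
      π * min (1 / ρ ^ 2) (π / (2 * ρ)) := by
  have hπ : 0 < π := pi_pos
  have hderiv := abs_deriv_integral_cos_mul_le hπ.le (φ := fun θ => θ + sin θ)
    (continuous_id.add continuous_sin).continuousOn
    ((continuous_inv_sq_add_sq_comp hρ.ne' continuous_sin).intervalIntegrable _ _)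
    (fun θ hθ => abs_add_sin_le_pi (abs_le.2 ⟨by linarith [hθ.1], hθ.2⟩))
    (fun θ _ => by positivity) x
  simp only [div_eq_mul_inv (cos _), deriv_const_mul_field, abs_mul, abs_of_pos (one_div_pos.2 hπ)]
  calc 1 / π * |deriv (fun y => ∫ θ in 0..π, cos (y * (θ + sin θ)) * (ρ ^ 2 + sin θ ^ 2)⁻¹) x|
      ≤ 1 / π * (π * ∫ θ in 0..π, (ρ ^ 2 + sin θ ^ 2)⁻¹) := by gcongr
    _ = ∫ θ in 0..π, (ρ ^ 2 + sin θ ^ 2)⁻¹ := by field_simp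
    _ ≤ min (π / ρ ^ 2) (π ^ 2 / (2 * ρ)) :=
        le_min (integral_inv_sq_add_sin_sq_le_pi_div_sq hρ.ne')
          (integral_inv_sq_add_sin_sq_le_pi_sq_div hρ)
    _ = π * min (1 / ρ ^ 2) (π / (2 * ρ)) := by
        rw [mul_min_of_nonneg _ _ hπ.le]
        ring_nf
end

section
/- For all x ∈ ℝ and ρ > 0, the partial derivative of H with respect to ρ satisfies |∂H/∂ρ (x, ρ)| ≤ (2/ρ) · min(1/ρ², π/(2ρ)), where H(x, ρ) = (1/π) ∫₀^π cos(x(θ + sin θ))/(ρ² + sin²θ) dθ. -/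
/-!
Differentiating under the integral sign,
`∂H/∂ρ = -(1/π) ∫₀^π 2ρ cos(x(θ + sin θ)) / (ρ² + sin²θ)² dθ`, so
`|∂H/∂ρ| ≤ (1/π) ∫₀^π 2ρ / (ρ² + sin²θ)² dθ`. The integrand is at most `2/ρ³`, which gives the
first bound, and at most `(2/ρ) / (ρ² + sin²θ)`. By Jordan's inequality the integral of the latter
is at most twice `(2/ρ) ∫₀^π dθ / (ρ² + (2θ/π)²) ≤ (2/ρ) · π²/(4ρ)`, an arctangent integral,
which gives the second.
-/

open Real intervalIntegral MeasureTheory Set Filter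

section Kernel

variable {r t : ℝ}

theorem hasDerivAt_div_sq_add (c : ℝ) (h : r ^ 2 + t ≠ 0) :
    HasDerivAt (fun r => c / (r ^ 2 + t)) (-(2 * r * c) / (r ^ 2 + t) ^ 2) r := by
  have hd : HasDerivAt (fun r : ℝ => r ^ 2 + t) (2 * r) r := by
    simpa using (hasDerivAt_pow 2 r).add_const t
  exact ((hasDerivAt_const r c).div hd h).congr_deriv (by ring)

theorem two_mul_div_sq_add_sq_le_two_div_pow_three (hr : 0 < r) (ht : 0 ≤ t) :
    2 * r / (r ^ 2 + t) ^ 2 ≤ 2 / r ^ 3 := by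
  rw [div_le_div_iff₀ (by positivity) (by positivity)]
  have : (r ^ 2) ^ 2 ≤ (r ^ 2 + t) ^ 2 := by gcongr; linarith
  nlinarith

theorem two_mul_div_sq_add_sq_le_two_div_mul_one_div (hr : 0 < r) (ht : 0 ≤ t) :
    2 * r / (r ^ 2 + t) ^ 2 ≤ 2 / r * (1 / (r ^ 2 + t)) := by
  rw [div_mul_div_comm, div_le_div_iff₀ (by positivity) (by positivity)]
  have : 0 ≤ r ^ 2 + t := by positivity
  nlinarith

end Kernel

theorem hasDerivAt_integral_div_sq_add {f q : ℝ → ℝ} {ρ : ℝ} (a b : ℝ) (hf : Continuous f)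
    (hq : Continuous q) (hq₀ : ∀ θ, 0 ≤ q θ) (hρ : 0 < ρ) :
    HasDerivAt (fun r => ∫ θ in a..b, f θ / (r ^ 2 + q θ))
      (∫ θ in a..b, -(2 * ρ * f θ) / (ρ ^ 2 + q θ) ^ 2) ρ := by
  have hball : ∀ r ∈ Metric.ball ρ (ρ / 2), ρ / 2 < r := fun r hr => by
    rw [Metric.mem_ball, Real.dist_eq, abs_sub_lt_iff] at hr
    linarith
  have hden : ∀ r, 0 < r → ∀ θ, 0 < r ^ 2 + q θ := fun r hr θ => by
    have := hq₀ θ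
    positivity
  have hcont : ∀ r, 0 < r → Continuous fun θ => f θ / (r ^ 2 + q θ) := fun r hr =>
    hf.div (by fun_prop) fun θ => (hden r hr θ).ne'
  have hdom : ∀ θ, ∀ r ∈ Metric.ball ρ (ρ / 2),
      ‖-(2 * r * f θ) / (r ^ 2 + q θ) ^ 2‖ ≤ 16 / ρ ^ 3 * |f θ| := fun θ r hr => by
    have hr := hball r hr
    have hr₀ : 0 < r := by linarith
    calc ‖-(2 * r * f θ) / (r ^ 2 + q θ) ^ 2‖ = |f θ| * (2 * r / (r ^ 2 + q θ) ^ 2) := by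
          simp only [norm_div, norm_neg, norm_mul, Real.norm_eq_abs, abs_two, abs_of_pos hr₀,
            abs_of_pos (pow_pos (hden r hr₀ θ) 2)]
          ring
      _ ≤ |f θ| * (2 / (ρ / 2) ^ 3) := by
          refine mul_le_mul_of_nonneg_left ?_ (abs_nonneg _)
          exact (two_mul_div_sq_add_sq_le_two_div_pow_three hr₀ (hq₀ θ)).trans (by gcongr)
      _ = 16 / ρ ^ 3 * |f θ| := by ring
  refine (hasDerivAt_integral_of_dominated_loc_of_deriv_le (Metric.ball_mem_nhds ρ (half_pos hρ))
    ?_ ((hcont ρ hρ).intervalIntegrable a b) ?_ (.of_forall fun θ _ => hdom θ)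
    ((continuous_const.mul hf.abs).intervalIntegrable a b) ?_).2
  · filter_upwards [Metric.ball_mem_nhds ρ (half_pos hρ)] with r hr
    exact (hcont r (by linarith [hball r hr])).aestronglyMeasurable
  · exact (Continuous.div (by fun_prop) (by fun_prop)
      fun θ => (pow_pos (hden ρ hρ θ) 2).ne').aestronglyMeasurable
  · exact .of_forall fun θ _ r hr =>
      hasDerivAt_div_sq_add _ (hden r (by linarith [hball r hr]) θ).ne'

theorem integral_one_div_sq_add_mul_sq_le {ρ k : ℝ} (hρ : 0 < ρ) (hk : 0 < k) (T : ℝ) :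
    ∫ θ in 0..T, 1 / (ρ ^ 2 + (k * θ) ^ 2) ≤ π / (2 * k * ρ) := by
  have hprim : ∀ θ, HasDerivAt (fun θ => arctan (k * θ / ρ) / (k * ρ))
      (1 / (ρ ^ 2 + (k * θ) ^ 2)) θ := fun θ => by
    refine ((((hasDerivAt_id' θ).const_mul k).div_const ρ).arctan.div_const (k * ρ)).congr_deriv ?_
    field_simp
  rw [integral_eq_sub_of_hasDerivAt (fun θ _ => hprim θ)
    ((Continuous.div (by fun_prop) (by fun_prop) fun θ => by positivity).intervalIntegrable 0 T)]
  have := arctan_lt_pi_div_two (k * T / ρ)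
  simp only [mul_zero, zero_div, arctan_zero, sub_zero]
  rw [div_le_div_iff₀ (by positivity) (by positivity)]
  nlinarith [mul_pos hk hρ]

/-- Jordan's inequality `sin θ ≥ (2/π) min(θ, π - θ)` on `[0, π]`. -/
theorem one_div_sq_add_sin_sq_le {ρ θ : ℝ} (hρ : 0 < ρ) (hθ : θ ∈ Icc 0 π) :
    1 / (ρ ^ 2 + sin θ ^ 2) ≤
      1 / (ρ ^ 2 + (2 / π * θ) ^ 2) + 1 / (ρ ^ 2 + (2 / π * (π - θ)) ^ 2) := by
  obtain ⟨hθ₀, hθπ⟩ := hθ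
  rcases le_total θ (π / 2) with hθ' | hθ'
  · have hsin : (2 / π * θ) ^ 2 ≤ sin θ ^ 2 := by
      gcongr
      exact mul_le_sin hθ₀ hθ'
    refine le_add_of_le_of_nonneg (one_div_le_one_div_of_le (by positivity) (by linarith)) ?_
    positivity
  · have hsin : (2 / π * (π - θ)) ^ 2 ≤ sin θ ^ 2 := by
      have h := mul_le_sin (x := π - θ) (by linarith) (by linarith)
      rw [sin_pi_sub] at h
      gcongr
    refine le_add_of_nonneg_of_le ?_ (one_div_le_one_div_of_le (by positivity) (by linarith))
    positivity

theorem integral_one_div_sq_add_sin_sq_le {ρ : ℝ} (hρ : 0 < ρ) :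
    ∫ θ in 0..π, 1 / (ρ ^ 2 + sin θ ^ 2) ≤ π ^ 2 / (2 * ρ) := by
  set g : ℝ → ℝ := fun θ => 1 / (ρ ^ 2 + (2 / π * θ) ^ 2)
  have hcont : ∀ s : ℝ → ℝ, Continuous s → Continuous fun θ => 1 / (ρ ^ 2 + s θ ^ 2) :=
    fun s hs => continuous_const.div (by fun_prop) fun θ => by positivity
  have hg₁ : IntervalIntegrable g volume 0 π :=
    (hcont _ (continuous_const.mul continuous_id)).intervalIntegrable 0 π
  have hg₂ : IntervalIntegrable (fun θ => g (π - θ)) volume 0 π :=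
    (hcont _ (continuous_const.mul (continuous_sub_left π))).intervalIntegrable 0 π
  calc ∫ θ in 0..π, 1 / (ρ ^ 2 + sin θ ^ 2)
      ≤ ∫ θ in 0..π, (g θ + g (π - θ)) :=
        integral_mono_on pi_pos.le ((hcont _ continuous_sin).intervalIntegrable 0 π)
          (hg₁.add hg₂) fun θ hθ => one_div_sq_add_sin_sq_le hρ hθ
    _ = 2 * ∫ θ in 0..π, g θ := by
        rw [integral_add hg₁ hg₂, integral_comp_sub_left g π, sub_self, sub_zero, two_mul]
    _ ≤ 2 * (π / (2 * (2 / π) * ρ)) := by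
        gcongr
        exact integral_one_div_sq_add_mul_sq_le hρ (by positivity) π
    _ = π ^ 2 / (2 * ρ) := by field_simp

theorem integral_two_mul_div_sq_add_sin_sq_sq_le {ρ : ℝ} (hρ : 0 < ρ) :
    ∫ θ in 0..π, 2 * ρ / (ρ ^ 2 + sin θ ^ 2) ^ 2 ≤
      π * (2 / ρ * min (1 / ρ ^ 2) (π / (2 * ρ))) := by
  have hint : IntervalIntegrable (fun θ => 2 * ρ / (ρ ^ 2 + sin θ ^ 2) ^ 2) volume 0 π :=
    (by fun_prop (disch := exact fun _ => by positivity) : Continuous _).intervalIntegrable 0 π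
  rw [mul_min_of_nonneg _ _ (by positivity), mul_min_of_nonneg _ _ pi_pos.le]
  refine le_min ?_ ?_
  · calc ∫ θ in 0..π, 2 * ρ / (ρ ^ 2 + sin θ ^ 2) ^ 2 ≤ ∫ _ in 0..π, 2 / ρ ^ 3 :=
          integral_mono_on pi_pos.le hint intervalIntegrable_const fun θ _ =>
            two_mul_div_sq_add_sq_le_two_div_pow_three hρ (sq_nonneg _)
      _ = π * (2 / ρ * (1 / ρ ^ 2)) := by
          rw [intervalIntegral.integral_const, smul_eq_mul]
          field_simp
          ring
  · calc ∫ θ in 0..π, 2 * ρ / (ρ ^ 2 + sin θ ^ 2) ^ 2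
          ≤ ∫ θ in 0..π, 2 / ρ * (1 / (ρ ^ 2 + sin θ ^ 2)) :=
          integral_mono_on pi_pos.le hint
            ((by fun_prop (disch := exact fun _ => by positivity) : Continuous _).intervalIntegrable
              0 π) fun θ _ =>
            two_mul_div_sq_add_sq_le_two_div_mul_one_div hρ (sq_nonneg _)
      _ ≤ 2 / ρ * (π ^ 2 / (2 * ρ)) := by
          rw [intervalIntegral.integral_const_mul]
          gcongr
          exact integral_one_div_sq_add_sin_sq_le hρ
      _ = π * (2 / ρ * (π / (2 * ρ))) := by ring

theorem good_H_deriv_rho_bound (x ρ : ℝ) (hρ : 0 < ρ) :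
    |deriv (fun r : ℝ =>
        (1 / π) * ∫ θ in (0:ℝ)..π, Real.cos (x * (θ + Real.sin θ)) / (r ^ 2 + Real.sin θ ^ 2)) ρ| ≤
      (2 / ρ) * min (1 / ρ ^ 2) (π / (2 * ρ)) := by
  have hH := (hasDerivAt_integral_div_sq_add (f := fun θ => cos (x * (θ + sin θ)))
    (q := fun θ => sin θ ^ 2) 0 π (by fun_prop) (by fun_prop) (fun θ => sq_nonneg _) hρ).const_mul
    (1 / π)
  have hdom : |∫ θ in 0..π, -(2 * ρ * cos (x * (θ + sin θ))) / (ρ ^ 2 + sin θ ^ 2) ^ 2| ≤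
      ∫ θ in 0..π, 2 * ρ / (ρ ^ 2 + sin θ ^ 2) ^ 2 := by
    rw [← Real.norm_eq_abs]
    refine norm_integral_le_of_norm_le pi_pos.le (.of_forall fun θ _ => ?_)
      ((by fun_prop (disch := exact fun _ => by positivity) :
        Continuous fun θ => 2 * ρ / (ρ ^ 2 + sin θ ^ 2) ^ 2).intervalIntegrable 0 π)
    simp only [norm_div, norm_neg, norm_mul, Real.norm_eq_abs, abs_two, abs_of_pos hρ,
      abs_of_pos (by positivity : 0 < (ρ ^ 2 + sin θ ^ 2) ^ 2)]
    exact div_le_div_of_nonneg_right (mul_le_of_le_one_right (by positivity) (abs_cos_le_one _))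
      (by positivity)
  rw [hH.deriv, abs_mul, abs_of_pos (by positivity : (0 : ℝ) < 1 / π)]
  calc 1 / π * |∫ θ in 0..π, -(2 * ρ * cos (x * (θ + sin θ))) / (ρ ^ 2 + sin θ ^ 2) ^ 2|
      ≤ 1 / π * (π * (2 / ρ * min (1 / ρ ^ 2) (π / (2 * ρ)))) := by
        gcongr
        exact hdom.trans (integral_two_mul_div_sq_add_sin_sq_sq_le hρ)
    _ = 2 / ρ * min (1 / ρ ^ 2) (π / (2 * ρ)) := by field_simp
end

section
/- For all x ∈ ℝ and 0 < ρ₀ < ρ, |H(x, ρ) − H(x, ρ₀)| ≤ min((ρ + ρ₀)/(ρρ₀), π) · (ρ − ρ₀)/(ρ₀ρ), where H(x, ρ) = (1/π) ∫₀^π cos(x(θ + sin θ))/(ρ² + sin²θ) dθ. -/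
/-!
Since `|cos| ≤ 1`, `|H(x, ρ) - H(x, ρ₀)|` is at most
`(1/π) ∫₀^π (1/(ρ₀² + sin²θ) - 1/(ρ² + sin²θ)) dθ`. Dropping `sin²θ` bounds the integrand by
`1/ρ₀² - 1/ρ²`, which gives the first term of the minimum. Alternatively the integrand is at most
`(1 - ρ₀²/ρ²)/(ρ₀² + sin²θ)`, and Jordan's inequality `sin θ ≥ 2θ/π` on `[0, π/2]` reduces
`∫₀^π dθ/(a² + sin²θ)` to an arctangent integral bounded by `π²/(2a)`, which gives the second.
-/

open Real intervalIntegral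

lemma abs_div_sub_div_le_one_div_sub_one_div {c p q : ℝ} (hc : |c| ≤ 1) (hp : 0 < p)
    (hpq : p ≤ q) : |c / q - c / p| ≤ 1 / p - 1 / q := by
  have hqp : 1 / q ≤ 1 / p := one_div_le_one_div_of_le hp hpq
  calc |c / q - c / p| = |c| * (1 / p - 1 / q) := by
        rw [show c / q - c / p = c * -(1 / p - 1 / q) by ring, abs_mul, abs_neg,
          abs_of_nonneg (sub_nonneg.2 hqp)]
    _ ≤ 1 / p - 1 / q := mul_le_of_le_one_left (sub_nonneg.2 hqp) hc

lemma one_div_add_sub_one_div_add_le {p q t : ℝ} (hp : 0 < p) (hpq : p ≤ q) (ht : 0 ≤ t) :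
    1 / (p + t) - 1 / (q + t) ≤ 1 / p - 1 / q := by
  have hq : 0 < q := hp.trans_le hpq
  rw [div_sub_div _ _ (by positivity) (by positivity), div_sub_div _ _ hp.ne' hq.ne',
    div_le_div_iff₀ (by positivity) (by positivity)]
  nlinarith [mul_nonneg (sub_nonneg.2 hpq) (by positivity : 0 ≤ t * (p + q + t))]

lemma one_div_add_sub_one_div_add_le_mul {p q t : ℝ} (hp : 0 < p) (hpq : p ≤ q) (ht : 0 ≤ t) :
    1 / (p + t) - 1 / (q + t) ≤ (1 - p / q) * (1 / (p + t)) := by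
  have hq : 0 < q := hp.trans_le hpq
  rw [div_sub_div _ _ (by positivity) (by positivity), one_sub_div hq.ne', div_mul_div_comm,
    div_le_div_iff₀ (by positivity) (by positivity)]
  nlinarith [mul_nonneg (mul_nonneg (sub_nonneg.2 hpq) ht) (by positivity : 0 ≤ p + t)]

lemma continuous_one_div_add {p : ℝ} {w : ℝ → ℝ} (hp : 0 < p) (hw : Continuous w)
    (hw0 : ∀ θ, 0 ≤ w θ) : Continuous fun θ ↦ 1 / (p + w θ) :=
  continuous_const.div (by fun_prop) fun θ ↦ (add_pos_of_pos_of_nonneg hp (hw0 θ)).ne'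

lemma integral_one_div_sq_add_mul_sq {a c : ℝ} (ha : 0 < a) (hc : 0 < c) (b : ℝ) :
    ∫ θ in (0 : ℝ)..b, 1 / (a ^ 2 + (c * θ) ^ 2) = arctan (c * b / a) / (a * c) := by
  have hderiv : ∀ θ ∈ Set.uIcc 0 b, HasDerivAt (fun θ ↦ arctan (c * θ / a) / (a * c))
      (1 / (a ^ 2 + (c * θ) ^ 2)) θ := by
    intro θ _
    refine (((hasDerivAt_id' θ).const_mul c).div_const a).arctan.div_const (a * c)
      |>.congr_deriv ?_
    field_simp
  rw [integral_eq_sub_of_hasDerivAt hderiv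
    ((continuous_one_div_add (pow_pos ha 2) (w := fun θ ↦ (c * θ) ^ 2) (by fun_prop)
      fun θ ↦ sq_nonneg _).intervalIntegrable 0 b)]
  simp

lemma integral_one_div_sq_add_sin_sq_zero_pi_div_two_le (a : ℝ) (ha : 0 < a) :
    ∫ θ in (0 : ℝ)..π / 2, 1 / (a ^ 2 + sin θ ^ 2) ≤ π ^ 2 / (4 * a) := by
  have hJordan : ∫ θ in (0 : ℝ)..π / 2, 1 / (a ^ 2 + sin θ ^ 2) ≤
      ∫ θ in (0 : ℝ)..π / 2, 1 / (a ^ 2 + (2 / π * θ) ^ 2) := by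
    have hint {w : ℝ → ℝ} (hw : Continuous w) :
        IntervalIntegrable (fun θ ↦ 1 / (a ^ 2 + w θ ^ 2)) MeasureTheory.volume 0 (π / 2) :=
      (continuous_one_div_add (pow_pos ha 2) (by fun_prop) fun θ ↦ sq_nonneg _).intervalIntegrable
        _ _
    refine integral_mono_on (by positivity) (hint continuous_sin) (hint (by fun_prop))
      fun θ ⟨h0, hπ2⟩ ↦ ?_
    have hle := mul_le_sin h0 hπ2
    have h0' : 0 ≤ 2 / π * θ := by positivity
    gcongr
  rw [integral_one_div_sq_add_mul_sq ha (by positivity)] at hJordan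
  calc _ ≤ _ := hJordan
    _ ≤ (π / 2) / (a * (2 / π)) := by gcongr; exact (arctan_lt_pi_div_two _).le
    _ = π ^ 2 / (4 * a) := by field_simp; ring

lemma integral_one_div_sq_add_sin_sq_zero_pi_le (a : ℝ) (ha : 0 < a) :
    ∫ θ in (0 : ℝ)..π, 1 / (a ^ 2 + sin θ ^ 2) ≤ π ^ 2 / (2 * a) := by
  have hint (u v : ℝ) :
      IntervalIntegrable (fun θ ↦ 1 / (a ^ 2 + sin θ ^ 2)) MeasureTheory.volume u v :=
    (continuous_one_div_add (pow_pos ha 2) (by fun_prop) fun θ ↦ sq_nonneg _).intervalIntegrable u v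
  have hsymm : ∫ θ in π / 2..π, 1 / (a ^ 2 + sin θ ^ 2) =
      ∫ θ in (0 : ℝ)..π / 2, 1 / (a ^ 2 + sin θ ^ 2) := by
    have h := integral_comp_sub_left (a := 0) (b := π / 2) (fun θ ↦ 1 / (a ^ 2 + sin θ ^ 2)) π
    simp only [sin_pi_sub, sub_zero, show π - π / 2 = π / 2 by ring] at h
    exact h.symm
  rw [← integral_add_adjacent_intervals (hint 0 (π / 2)) (hint (π / 2) π), hsymm]
  have hhalf := integral_one_div_sq_add_sin_sq_zero_pi_div_two_le a ha
  calc _ ≤ π ^ 2 / (4 * a) + π ^ 2 / (4 * a) := add_le_add hhalf hhalf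
    _ = π ^ 2 / (2 * a) := by ring

section Comparison

variable {c w : ℝ → ℝ} {a b p q : ℝ}

lemma abs_integral_div_add_sub_integral_div_add_le (hc : Continuous c) (hc1 : ∀ θ, |c θ| ≤ 1)
    (hw : Continuous w) (hw0 : ∀ θ, 0 ≤ w θ) (hab : a ≤ b) (hp : 0 < p) (hpq : p ≤ q) :
    |(∫ θ in a..b, c θ / (q + w θ)) - ∫ θ in a..b, c θ / (p + w θ)| ≤
      ∫ θ in a..b, (1 / (p + w θ) - 1 / (q + w θ)) := by
  have hcont (r : ℝ) (hr : 0 < r) : Continuous fun θ ↦ c θ / (r + w θ) :=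
    hc.div (continuous_const.add hw) fun θ ↦ (add_pos_of_pos_of_nonneg hr (hw0 θ)).ne'
  rw [← integral_sub ((hcont q (hp.trans_le hpq)).intervalIntegrable a b)
    ((hcont p hp).intervalIntegrable a b)]
  refine (abs_integral_le_integral_abs hab).trans <| integral_mono_on hab
    ((((hcont q (hp.trans_le hpq)).sub (hcont p hp)).abs).intervalIntegrable a b)
    (((continuous_one_div_add hp hw hw0).sub
      (continuous_one_div_add (hp.trans_le hpq) hw hw0)).intervalIntegrable a b)
    fun θ _ ↦ abs_div_sub_div_le_one_div_sub_one_div (hc1 θ) (by linarith [hw0 θ]) (by linarith)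

lemma integral_one_div_add_sub_one_div_add_le_mul_sub (hw : Continuous w) (hw0 : ∀ θ, 0 ≤ w θ)
    (hab : a ≤ b) (hp : 0 < p) (hpq : p ≤ q) :
    ∫ θ in a..b, (1 / (p + w θ) - 1 / (q + w θ)) ≤ (b - a) * (1 / p - 1 / q) := by
  calc _ ≤ ∫ _ in a..b, (1 / p - 1 / q) := integral_mono_on hab
        (((continuous_one_div_add hp hw hw0).sub
          (continuous_one_div_add (hp.trans_le hpq) hw hw0)).intervalIntegrable a b)
        intervalIntegrable_const
        fun θ _ ↦ one_div_add_sub_one_div_add_le hp hpq (hw0 θ)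
    _ = (b - a) * (1 / p - 1 / q) := by simp only [integral_const, smul_eq_mul]

lemma integral_one_div_add_sub_one_div_add_le_mul_integral (hw : Continuous w)
    (hw0 : ∀ θ, 0 ≤ w θ) (hab : a ≤ b) (hp : 0 < p) (hpq : p ≤ q) :
    ∫ θ in a..b, (1 / (p + w θ) - 1 / (q + w θ)) ≤
      (1 - p / q) * ∫ θ in a..b, 1 / (p + w θ) := by
  rw [← integral_const_mul]
  exact integral_mono_on hab (((continuous_one_div_add hp hw hw0).sub
      (continuous_one_div_add (hp.trans_le hpq) hw hw0)).intervalIntegrable a b)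
    ((continuous_const.mul (continuous_one_div_add hp hw hw0)).intervalIntegrable a b)
    fun θ _ ↦ one_div_add_sub_one_div_add_le_mul hp hpq (hw0 θ)

end Comparison

theorem good_H_lipschitz_rho (x ρ ρ₀ : ℝ) (hρ₀ : 0 < ρ₀) (hρ : ρ₀ < ρ) :
    |((1 / π) * ∫ θ in (0:ℝ)..π, Real.cos (x * (θ + Real.sin θ)) / (ρ ^ 2 + Real.sin θ ^ 2)) -
      ((1 / π) * ∫ θ in (0:ℝ)..π, Real.cos (x * (θ + Real.sin θ)) / (ρ₀ ^ 2 + Real.sin θ ^ 2))| ≤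
      min ((ρ + ρ₀) / (ρ * ρ₀)) π * ((ρ - ρ₀) / (ρ₀ * ρ)) := by
  have hρpos : 0 < ρ := hρ₀.trans hρ
  have hsq : ρ₀ ^ 2 ≤ ρ ^ 2 := by gcongr
  have hw : Continuous fun θ ↦ sin θ ^ 2 := by fun_prop
  have hw0 (θ : ℝ) : 0 ≤ sin θ ^ 2 := sq_nonneg _
  have hdiff := abs_integral_div_add_sub_integral_div_add_le (c := fun θ ↦ cos (x * (θ + sin θ)))
    (by fun_prop) (fun θ ↦ abs_cos_le_one _) hw hw0 pi_pos.le (by positivity) hsq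
  have hbound₁ :=
    integral_one_div_add_sub_one_div_add_le_mul_sub hw hw0 pi_pos.le (by positivity) hsq
  have hbound₂ := (integral_one_div_add_sub_one_div_add_le_mul_integral hw hw0 pi_pos.le
    (by positivity) hsq).trans <| mul_le_mul_of_nonneg_left
      (integral_one_div_sq_add_sin_sq_zero_pi_le ρ₀ hρ₀)
      (sub_nonneg.2 <| (div_le_one (by positivity)).2 hsq)
  rw [← mul_sub, abs_mul, abs_of_pos (by positivity),
    min_mul_of_nonneg _ _ (div_nonneg (sub_nonneg.2 hρ.le) (by positivity))]
  refine le_min ?_ ?_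
  · calc _ ≤ 1 / π * ((π - 0) * (1 / ρ₀ ^ 2 - 1 / ρ ^ 2)) := by
          gcongr; exact hdiff.trans hbound₁
      _ = _ := by field_simp; ring
  · calc _ ≤ 1 / π * ((1 - ρ₀ ^ 2 / ρ ^ 2) * (π ^ 2 / (2 * ρ₀))) := by
          gcongr; exact hdiff.trans hbound₂
      _ = π * ((ρ + ρ₀) / (2 * ρ)) * ((ρ - ρ₀) / (ρ₀ * ρ)) := by field_simp; ring
      _ ≤ π * 1 * ((ρ - ρ₀) / (ρ₀ * ρ)) := by
          gcongr
          rw [div_le_one (by positivity)]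
          linarith
      _ = _ := by ring
end

section
/- For all x₀ ∈ ℝ and ρ > 0, |H(x₀, ρ) − (1/ρ²) 𝕁_{x₀}(−x₀)| ≤ 1/ρ⁴, where H(x₀, ρ) = (1/π) ∫₀^π cos(x₀(θ + sin θ))/(ρ² + sin²θ) dθ and 𝕁_γ(x) = (1/π) ∫₀^π cos(γθ − x sin θ) dθ is the Anger function. -/
open Real

theorem good_H_compare_anger (x₀ ρ : ℝ) (hρ : 0 < ρ) :
    |((1 / π) * ∫ θ in (0:ℝ)..π, Real.cos (x₀ * (θ + Real.sin θ)) / (ρ ^ 2 + Real.sin θ ^ 2)) -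
      (1 / ρ ^ 2) * ((1 / π) * ∫ θ in (0:ℝ)..π, Real.cos (x₀ * (θ + Real.sin θ)))| ≤ 1 / ρ ^ 4 := by
  have hπ : (0:ℝ) < π := Real.pi_pos
  have hρ2 : (0:ℝ) < ρ ^ 2 := by positivity
  set f : ℝ → ℝ := fun θ => Real.cos (x₀ * (θ + Real.sin θ)) / (ρ ^ 2 + Real.sin θ ^ 2) with hf
  set g : ℝ → ℝ := fun θ => Real.cos (x₀ * (θ + Real.sin θ)) / ρ ^ 2 with hg
  have hfc : Continuous f := by
    apply Continuous.div
    · fun_prop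
    · fun_prop
    · intro x; positivity
  have hgc : Continuous g := by
    apply Continuous.div_const
    fun_prop
  have key : ∀ θ : ℝ, |f θ - g θ| ≤ 1 / ρ ^ 4 := by
    intro θ
    have hd : (0:ℝ) < ρ ^ 2 + Real.sin θ ^ 2 := by positivity
    have heq : f θ - g θ =
        -(Real.cos (x₀ * (θ + Real.sin θ)) * Real.sin θ ^ 2) /
          (ρ ^ 2 * (ρ ^ 2 + Real.sin θ ^ 2)) := by
      simp only [hf, hg]
      field_simp
      ring
    rw [heq, abs_div, abs_neg, abs_mul, abs_of_nonneg (le_of_lt (by positivity :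
      (0:ℝ) < ρ ^ 2 * (ρ ^ 2 + Real.sin θ ^ 2)))]
    apply div_le_div₀ (by norm_num)
    · have h1 : |Real.cos (x₀ * (θ + Real.sin θ))| ≤ 1 := Real.abs_cos_le_one _
      have h2 : |Real.sin θ ^ 2| ≤ 1 := by
        rw [abs_of_nonneg (sq_nonneg _)]
        exact Real.sin_sq_le_one θ
      calc |Real.cos (x₀ * (θ + Real.sin θ))| * |Real.sin θ ^ 2| ≤ 1 * 1 :=
            mul_le_mul h1 h2 (abs_nonneg _) (by norm_num)
        _ = 1 := by norm_num
    · positivity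
    · have h2 : Real.sin θ ^ 2 ≤ 1 := Real.sin_sq_le_one θ
      nlinarith [sq_nonneg (Real.sin θ), sq_nonneg ρ]
  have hint : (1 / ρ ^ 2) * ((1 / π) * ∫ θ in (0:ℝ)..π, Real.cos (x₀ * (θ + Real.sin θ)))
      = (1 / π) * ∫ θ in (0:ℝ)..π, g θ := by
    rw [hg]
    rw [intervalIntegral.integral_div]
    ring
  rw [hint, ← mul_sub, ← intervalIntegral.integral_sub
    (hfc.intervalIntegrable 0 π) (hgc.intervalIntegrable 0 π)]
  rw [abs_mul, abs_of_pos (by positivity : (0:ℝ) < 1 / π)]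
  have hbound : ‖∫ θ in (0:ℝ)..π, (f θ - g θ)‖ ≤ (1 / ρ ^ 4) * |π - 0| :=
    intervalIntegral.norm_integral_le_of_norm_le_const fun θ _ => by
      rw [Real.norm_eq_abs]; exact key θ
  rw [Real.norm_eq_abs] at hbound
  calc 1 / π * |∫ θ in (0:ℝ)..π, (f θ - g θ)| ≤ 1 / π * ((1 / ρ ^ 4) * |π - 0|) := by
        exact mul_le_mul_of_nonneg_left hbound (by positivity)
    _ = 1 / ρ ^ 4 := by
        rw [sub_zero, abs_of_pos hπ]; field_simp
end

section
/- For every ρ > 0, the function g(θ) = 1/(ρ² + sin²θ) − 1/(ρ² + θ²) is nonnegative and bounded by π²/12 on [0, π/2]. -/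
open Real

lemma sin_ge_sub_cube' (x : ℝ) (hx : 0 ≤ x) : x - x ^ 3 / 6 ≤ Real.sin x := by
  have hmono : MonotoneOn (fun t : ℝ => Real.sin t - t + t ^ 3 / 6) (Set.Ici 0) := by
    apply monotoneOn_of_deriv_nonneg (convex_Ici 0)
    · exact (Real.continuous_sin.sub continuous_id).add
        ((continuous_pow 3).div_const 6) |>.continuousOn
    · intro y _
      have hd : DifferentiableAt ℝ (fun t : ℝ => Real.sin t - t + t ^ 3 / 6) y := by
        fun_prop
      exact hd.differentiableWithinAt
    · intro y hy
      rw [interior_Ici] at hy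
      have hder : HasDerivAt (fun t : ℝ => Real.sin t - t + t ^ 3 / 6)
          (Real.cos y - 1 + 3 * y ^ 2 / 6) y := by
        have h1 := (Real.hasDerivAt_sin y).sub (hasDerivAt_id y)
        have h2 := (hasDerivAt_pow 3 y).div_const 6
        have := h1.add h2
        norm_num at this ⊢
        first
        | exact this
        | (convert this using 1; ring)
      rw [hder.deriv]
      have := Real.one_sub_sq_div_two_le_cos (x := y)
      nlinarith
  have h0 : (0:ℝ) ∈ Set.Ici (0:ℝ) := Set.mem_Ici.mpr le_rfl
  have := hmono h0 (Set.mem_Ici.mpr hx) hx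
  simp at this
  nlinarith [this]

theorem g_nonneg_bounded (ρ : ℝ) (hρ : 0 < ρ) (θ : ℝ) (hθ : θ ∈ Set.Icc 0 (π / 2)) :
    0 ≤ 1 / (ρ ^ 2 + Real.sin θ ^ 2) - 1 / (ρ ^ 2 + θ ^ 2) ∧
      1 / (ρ ^ 2 + Real.sin θ ^ 2) - 1 / (ρ ^ 2 + θ ^ 2) ≤ π ^ 2 / 12 := by
  obtain ⟨hθ0, hθπ⟩ := hθ
  have hπ := Real.pi_pos
  set s := Real.sin θ with hs
  have hs0 : 0 ≤ s := Real.sin_nonneg_of_nonneg_of_le_pi hθ0 (by linarith)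
  have hsθ : s ≤ θ := Real.sin_le hθ0
  have hjordan : 2 / π * θ ≤ s := Real.mul_le_sin hθ0 hθπ
  have hcube : θ - θ ^ 3 / 6 ≤ s := sin_ge_sub_cube' θ hθ0
  have hA : 0 < ρ ^ 2 + s ^ 2 := by positivity
  have hB : 0 < ρ ^ 2 + θ ^ 2 := by positivity
  have hsq : s ^ 2 ≤ θ ^ 2 := by nlinarith
  constructor
  · have h1 : 1 / (ρ ^ 2 + θ ^ 2) ≤ 1 / (ρ ^ 2 + s ^ 2) :=
      one_div_le_one_div_of_le hA (by linarith)
    linarith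
  · have hkey : θ ^ 2 - s ^ 2 ≤ π ^ 2 / 12 * ((ρ ^ 2 + s ^ 2) * (ρ ^ 2 + θ ^ 2)) := by
      have hps : 2 * θ ≤ π * s := by
        have := hjordan
        rw [div_mul_eq_mul_div, div_le_iff₀ hπ] at this
        nlinarith
      have hps2 : 4 * θ ^ 2 ≤ π ^ 2 * s ^ 2 := by nlinarith
      have hdiff : θ ^ 2 - s ^ 2 ≤ θ ^ 4 / 3 := by nlinarith
      have hρ2 : 0 ≤ ρ ^ 2 := sq_nonneg ρ
      nlinarith [sq_nonneg (ρ * θ), sq_nonneg (ρ * s), sq_nonneg ρ, mul_nonneg hρ2 hρ2]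
    have heq : 1 / (ρ ^ 2 + s ^ 2) - 1 / (ρ ^ 2 + θ ^ 2)
        = (θ ^ 2 - s ^ 2) / ((ρ ^ 2 + s ^ 2) * (ρ ^ 2 + θ ^ 2)) := by
      field_simp
      try ring
    rw [heq, div_le_iff₀ (by positivity)]
    linarith
end

section
/- For every λ > 0, the real part of ∫₀^∞ e^{−iλu³/6}/(1 + u²) du is strictly positive. -/
open Real Complex

open MeasureTheory Set Filter Topology

/-!
The real part is `∫₀^∞ cos φ / (1 + u²)` with `φ = λu³/6`. Integrate by parts twice against
the oscillation: first with `sin φ` and weight `g = 1 / (φ' (1 + u²))`, then with `1 - cos φ`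
(not `-cos φ`, so that the boundary term at `0` vanishes) and weight `h = -g' / φ'`.
Both boundary terms vanish, which gives the exact identity
`∫₀^∞ cos φ / (1 + u²) = ∫₀^∞ (1 - cos φ) (-h')`. Since `h` is decreasing, the integrand on
the right is nonnegative, and it is positive wherever `0 < φ < 2π`.
-/

theorem hasDerivAt_sin_mul_add_one_sub_cos_mul {φ g h : ℝ → ℝ} {φ' g' h' x : ℝ}
    (hφ : HasDerivAt φ φ' x) (hg : HasDerivAt g g' x) (hh : HasDerivAt h h' x)
    (hgh : g' + φ' * h x = 0) :
    HasDerivAt (fun y => Real.sin (φ y) * g y + (1 - Real.cos (φ y)) * h y)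
      (Real.cos (φ x) * φ' * g x + (1 - Real.cos (φ x)) * h') x := by
  refine ((hφ.sin.mul hg).add ((hφ.cos.const_sub 1).mul hh)).congr_deriv ?_
  linear_combination Real.sin (φ x) * hgh

theorem abs_sin_mul_add_one_sub_cos_mul_le (t a b : ℝ) :
    |Real.sin t * a + (1 - Real.cos t) * b| ≤ |t * a| + t ^ 2 / 2 * |b| := by
  have hsin : |Real.sin t| ≤ |t| := abs_sin_le_abs
  have hcos : |1 - Real.cos t| ≤ t ^ 2 / 2 := by
    rw [abs_of_nonneg (by linarith [Real.cos_le_one t])]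
    linarith [one_sub_sq_div_two_le_cos (x := t)]
  calc _ ≤ |Real.sin t| * |a| + |1 - Real.cos t| * |b| := by
        simpa only [abs_mul] using abs_add_le (Real.sin t * a) ((1 - Real.cos t) * b)
    _ ≤ |t| * |a| + t ^ 2 / 2 * |b| := by gcongr
    _ = _ := by rw [abs_mul]

theorem tendsto_div_one_add_sq_atTop : Tendsto (fun u : ℝ => u / (1 + u ^ 2)) atTop (𝓝 0) := by
  refine squeeze_zero' ?_ ?_ tendsto_inv_atTop_zero
  · filter_upwards [eventually_ge_atTop 0] with u hu using by positivity
  · filter_upwards [eventually_gt_atTop 0] with u hu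
    rw [div_le_iff₀ (by positivity)]
    field_simp
    nlinarith

theorem re_setIntegral_exp_mul_I_div_one_add_sq {φ : ℝ → ℝ} (hφ : Continuous φ)
    (s : Set ℝ) :
    (∫ u in s, Complex.exp (φ u * I) / (1 + (u : ℂ) ^ 2)).re
      = ∫ u in s, Real.cos (φ u) / (1 + u ^ 2) := by
  have hden (u : ℝ) : (1 + (u : ℂ) ^ 2) ≠ 0 := by
    exact_mod_cast (by positivity : 1 + u ^ 2 ≠ 0)
  have hint : Integrable (fun u : ℝ => Complex.exp (φ u * I) / (1 + (u : ℂ) ^ 2)) := by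
    refine integrable_inv_one_add_sq.mono'
      ((Continuous.div (by fun_prop) (by fun_prop) hden).aestronglyMeasurable) ?_
    filter_upwards with u
    rw [norm_div, Complex.norm_exp_ofReal_mul_I, ← ofReal_one, ← ofReal_pow, ← ofReal_add,
      Complex.norm_real, Real.norm_of_nonneg (by positivity), one_div]
  rw [← RCLike.re_to_complex, ← integral_re hint.integrableOn]
  congr 1 with u
  rw [RCLike.re_to_complex, ← ofReal_one, ← ofReal_pow, ← ofReal_add, Complex.div_ofReal_re,
    Complex.exp_ofReal_mul_I_re]

namespace CubicPhase

/- With `φ = l u³ / 6`: `sinWeight = 1 / (φ' (1 + u²))`, `cosWeight = -sinWeight' / φ'`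
and `remainderWeight = -cosWeight'`. -/
noncomputable def sinWeight (l u : ℝ) : ℝ := 2 / (l * u ^ 2 * (1 + u ^ 2))

noncomputable def cosWeight (l u : ℝ) : ℝ :=
  8 * (1 + 2 * u ^ 2) / (l ^ 2 * u ^ 5 * (1 + u ^ 2) ^ 2)

noncomputable def remainderWeight (l u : ℝ) : ℝ :=
  8 * (5 + 15 * u ^ 2 + 14 * u ^ 4) / (l ^ 2 * u ^ 6 * (1 + u ^ 2) ^ 3)

noncomputable def primitive (l u : ℝ) : ℝ :=
  Real.sin (l * u ^ 3 / 6) * sinWeight l u + (1 - Real.cos (l * u ^ 3 / 6)) * cosWeight l u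

noncomputable def remainder (l u : ℝ) : ℝ :=
  (1 - Real.cos (l * u ^ 3 / 6)) * remainderWeight l u

variable {l u : ℝ}

theorem primitive_zero (l : ℝ) : primitive l 0 = 0 := by
  simp [primitive]

theorem hasDerivAt_sinWeight (hl : l ≠ 0) (hu : u ≠ 0) :
    HasDerivAt (sinWeight l) (-4 * (1 + 2 * u ^ 2) / (l * u ^ 3 * (1 + u ^ 2) ^ 2)) u := by
  have hD := ((hasDerivAt_pow 2 u).const_mul l).fun_mul ((hasDerivAt_pow 2 u).const_add 1)
  have hD0 : l * u ^ 2 * (1 + u ^ 2) ≠ 0 := by positivity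
  refine ((hasDerivAt_const u (2 : ℝ)).div hD hD0).congr_deriv ?_
  field_simp
  ring

theorem hasDerivAt_cosWeight (hl : l ≠ 0) (hu : u ≠ 0) :
    HasDerivAt (cosWeight l) (-remainderWeight l u) u := by
  have hN := ((hasDerivAt_pow 2 u).const_mul 2).const_add 1 |>.const_mul 8
  have hD := ((hasDerivAt_pow 5 u).const_mul (l ^ 2)).fun_mul
    (((hasDerivAt_pow 2 u).const_add 1).fun_pow 2)
  have hD0 : l ^ 2 * u ^ 5 * (1 + u ^ 2) ^ 2 ≠ 0 := by positivity
  refine (hN.div hD hD0).congr_deriv ?_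
  unfold remainderWeight
  field_simp
  ring

theorem hasDerivAt_primitive (hl : l ≠ 0) (hu : u ≠ 0) :
    HasDerivAt (primitive l) (Real.cos (l * u ^ 3 / 6) / (1 + u ^ 2) - remainder l u) u := by
  have hφ : HasDerivAt (fun y => l * y ^ 3 / 6) (l * u ^ 2 / 2) u := by
    refine (((hasDerivAt_pow 3 u).const_mul l).div_const 6).congr_deriv ?_
    ring
  have hweights : -4 * (1 + 2 * u ^ 2) / (l * u ^ 3 * (1 + u ^ 2) ^ 2)
      + l * u ^ 2 / 2 * cosWeight l u = 0 := by
    unfold cosWeight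
    field_simp
    ring
  refine (hasDerivAt_sin_mul_add_one_sub_cos_mul hφ (hasDerivAt_sinWeight hl hu)
    (hasDerivAt_cosWeight hl hu) hweights).congr_deriv ?_
  unfold sinWeight remainder
  field_simp
  ring

theorem abs_primitive_le (hl : l ≠ 0) (hu : 0 < u) : |primitive l u| ≤ u / (1 + u ^ 2) := by
  have hsin : l * u ^ 3 / 6 * sinWeight l u = u / (3 * (1 + u ^ 2)) := by
    unfold sinWeight
    field_simp
    ring
  have hcos : (l * u ^ 3 / 6) ^ 2 / 2 * |cosWeight l u|
      = u * (1 + 2 * u ^ 2) / (9 * (1 + u ^ 2) ^ 2) := by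
    unfold cosWeight
    rw [abs_of_nonneg (by positivity)]
    field_simp
    ring
  calc |primitive l u|
      ≤ |l * u ^ 3 / 6 * sinWeight l u| + (l * u ^ 3 / 6) ^ 2 / 2 * |cosWeight l u| :=
        abs_sin_mul_add_one_sub_cos_mul_le _ _ _
    _ = u / (3 * (1 + u ^ 2)) + u * (1 + 2 * u ^ 2) / (9 * (1 + u ^ 2) ^ 2) := by
        rw [hsin, hcos, abs_of_nonneg (by positivity)]
    _ ≤ u / (1 + u ^ 2) := by
        field_simp
        nlinarith [pow_pos hu 3, pow_pos hu 5]

theorem tendsto_primitive_atTop (hl : l ≠ 0) : Tendsto (primitive l) atTop (𝓝 0) := by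
  refine squeeze_zero_norm' ?_ tendsto_div_one_add_sq_atTop
  filter_upwards [eventually_gt_atTop 0] with u hu using abs_primitive_le hl hu

theorem tendsto_primitive_nhdsGT_zero (hl : l ≠ 0) :
    Tendsto (primitive l) (𝓝[>] 0) (𝓝 0) := by
  have hcont : Continuous fun u : ℝ => u / (1 + u ^ 2) :=
    continuous_id.div (by fun_prop) fun u => by positivity
  refine squeeze_zero_norm' ?_ ((hcont.tendsto' 0 0 (by simp)).mono_left nhdsWithin_le_nhds)
  filter_upwards [self_mem_nhdsWithin] with u hu using abs_primitive_le hl hu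

theorem remainder_nonneg (l u : ℝ) : 0 ≤ remainder l u :=
  mul_nonneg (by linarith [Real.cos_le_one (l * u ^ 3 / 6)])
    (by unfold remainderWeight; positivity)

theorem remainder_le (hl : l ≠ 0) (u : ℝ) : remainder l u ≤ 5 / 3 * (1 + u ^ 2)⁻¹ := by
  rcases eq_or_ne u 0 with rfl | hu
  · norm_num [remainder]
  have hk : 0 ≤ remainderWeight l u := by
    unfold remainderWeight
    positivity
  calc remainder l u ≤ (l * u ^ 3 / 6) ^ 2 / 2 * remainderWeight l u :=
        mul_le_mul_of_nonneg_right
          (by linarith [one_sub_sq_div_two_le_cos (x := l * u ^ 3 / 6)]) hk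
    _ = (5 + 15 * u ^ 2 + 14 * u ^ 4) / (9 * (1 + u ^ 2) ^ 3) := by
        unfold remainderWeight
        field_simp
        ring
    _ ≤ 5 / 3 * (1 + u ^ 2)⁻¹ := by
        field_simp
        nlinarith [pow_nonneg (sq_nonneg u) 2, pow_nonneg (sq_nonneg u) 3]

theorem integrable_remainder (hl : l ≠ 0) : Integrable (remainder l) := by
  refine (integrable_inv_one_add_sq.const_mul (5 / 3)).mono' ?_ ?_
  · unfold remainder remainderWeight
    fun_prop
  · filter_upwards with u
    rw [Real.norm_of_nonneg (remainder_nonneg l u)]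
    exact remainder_le hl u

theorem remainder_pos (hl : l ≠ 0) (hu : u ≠ 0) (hφ₀ : 0 < l * u ^ 3 / 6)
    (hφ₁ : l * u ^ 3 / 6 < 2 * π) : 0 < remainder l u := by
  have hcos : Real.cos (l * u ^ 3 / 6) ≠ 1 := by
    rw [Ne, cos_eq_one_iff_of_lt_of_lt (by linarith [pi_pos]) hφ₁]
    exact hφ₀.ne'
  exact mul_pos (by linarith [(Real.cos_le_one _).lt_of_ne hcos])
    (by unfold remainderWeight; positivity)

theorem integral_remainder_pos (hl : 0 < l) : 0 < ∫ u in Ioi 0, remainder l u := by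
  set ε := min 1 l⁻¹
  have hε : 0 < ε := lt_min one_pos (inv_pos.2 hl)
  have hsupp : Ioo 0 ε ⊆ Function.support (remainder l) ∩ Ioi 0 := by
    rintro u ⟨hu, huε⟩
    have hu1 : u ≤ 1 := huε.le.trans (min_le_left _ _)
    have hlu : l * u ≤ 1 :=
      (le_inv_mul_iff₀ hl).1 (by simpa using huε.le.trans (min_le_right _ _))
    have hu3 : u ^ 3 ≤ u := by nlinarith [pow_le_one₀ hu.le hu1 (n := 2)]
    refine ⟨(remainder_pos hl.ne' hu.ne' (by positivity) ?_).ne', hu⟩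
    nlinarith [pi_gt_three]
  rw [setIntegral_pos_iff_support_of_nonneg_ae (ae_of_all _ (remainder_nonneg l))
    (integrable_remainder hl.ne').integrableOn]
  calc (0 : ENNReal) < volume (Ioo 0 ε) := by simpa using hε
    _ ≤ _ := measure_mono hsupp

theorem setIntegral_cos_div_one_add_sq_eq (hl : 0 < l) :
    ∫ u in Ioi 0, Real.cos (l * u ^ 3 / 6) / (1 + u ^ 2) = ∫ u in Ioi 0, remainder l u := by
  have hcos : IntegrableOn (fun u => Real.cos (l * u ^ 3 / 6) / (1 + u ^ 2)) (Ioi 0) := by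
    refine integrable_inv_one_add_sq.integrableOn.mono'
      ((Continuous.div (by fun_prop) (by fun_prop) fun u => by positivity).aestronglyMeasurable) ?_
    filter_upwards with u
    rw [norm_div, Real.norm_of_nonneg (by positivity : (0:ℝ) ≤ 1 + u ^ 2), div_eq_mul_inv]
    exact mul_le_of_le_one_left (by positivity) (Real.abs_cos_le_one _)
  have hrem := (integrable_remainder hl.ne').integrableOn (s := Ioi 0)
  have hprim : ContinuousWithinAt (primitive l) (Ici 0) 0 := by
    rw [← continuousWithinAt_Ioi_iff_Ici, ContinuousWithinAt, primitive_zero]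
    exact tendsto_primitive_nhdsGT_zero hl.ne'
  have hftc := integral_Ioi_of_hasDerivAt_of_tendsto hprim
    (fun u hu => hasDerivAt_primitive hl.ne' (ne_of_gt hu)) (hcos.sub hrem)
    (tendsto_primitive_atTop hl.ne')
  rwa [integral_sub hcos hrem, primitive_zero, sub_zero, sub_eq_zero] at hftc

end CubicPhase

theorem oscillatory_integral_re_pos (lam : ℝ) (hlam : 0 < lam) :
    0 < (∫ u in Set.Ioi (0:ℝ),
        Complex.exp (-Complex.I * lam * u ^ 3 / 6) / (1 + (u:ℂ) ^ 2)).re := by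
  have hphase (u : ℝ) : -I * lam * u ^ 3 / 6 = ((-(lam * u ^ 3 / 6) : ℝ) : ℂ) * I := by
    push_cast
    ring
  simp_rw [hphase]
  rw [re_setIntegral_exp_mul_I_div_one_add_sq (by fun_prop)]
  simp_rw [Real.cos_neg]
  rw [CubicPhase.setIntegral_cos_div_one_add_sq_eq hlam]
  exact CubicPhase.integral_remainder_pos hlam
end

section
/- For every λ > 0, ∫₀^∞ e^{iλu³}/(1 + u²) du = (e^{iπ/6}/(3λ^{1/3})) Γ(1/3) + R with |R| ≤ 1/(3λ). -/
/-!
Substituting `x = u³` turns the integral into `∫₀^∞ e^{iλx} / (3 x^{2/3} (1 + x^{2/3})) dx`. This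
integrand is holomorphic on the closed first quadrant minus `0` and bounded there by
`|w|^{-2/3} e^{-λ Im w} / 3`, so Cauchy's theorem on rectangles (top side to `+i∞`, right side to
`+∞`, left side to `0`) moves the contour onto the positive imaginary axis; this is the rotation
`u = e^{iπ/6} t` in the variable `x = u³`. On that axis the integrand is
`e^{iπ/6}/3 · y^{-2/3} e^{-λy} (1 + e^{iπ/3} y^{2/3})⁻¹`. Replacing the last factor by `1` gives
`e^{iπ/6} Γ(1/3) / (3 λ^{1/3})`, and since `|(1 + z)⁻¹ - 1| ≤ |z|` for `Re z ≥ 0`, the error is at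
most `∫₀^∞ e^{-λy} / 3 dy = 1 / (3λ)`.
-/

open Real Complex Set MeasureTheory Filter Topology
open scoped Interval

def puncturedFirstQuadrant : Set ℂ := (Ici 0 ×ℂ Ici 0) \ {0}

section QuarterTurn

variable {E : Type*} [NormedAddCommGroup E] {f : ℂ → E} {C a lam : ℝ}

def QuadrantDecayBound (f : ℂ → E) (C a lam : ℝ) : Prop :=
  ∀ w ∈ puncturedFirstQuadrant, ‖f w‖ ≤ C * ‖w‖ ^ (-a) * Real.exp (-(lam * w.im))

lemma ofReal_add_mul_I_mem_puncturedFirstQuadrant {x y : ℝ} (hx : 0 ≤ x) (hy : 0 ≤ y)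
    (h : 0 < x ∨ 0 < y) : (x + y * I : ℂ) ∈ puncturedFirstQuadrant := by
  refine ⟨by simp [mem_reProdIm, hx, hy], fun h0 => ?_⟩
  obtain ⟨rfl, rfl⟩ : x = 0 ∧ y = 0 := by simpa [Complex.ext_iff] using h0
  simp at h

lemma QuadrantDecayBound.norm_le_of_le_norm (hbound : QuadrantDecayBound f C a lam)
    (ha : 0 ≤ a) {w : ℂ} (hw : w ∈ puncturedFirstQuadrant) {r : ℝ} (hr : 0 < r) (hrw : r ≤ ‖w‖) :
    ‖f w‖ ≤ C * r ^ (-a) * Real.exp (-(lam * w.im)) := by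
  have hC : 0 ≤ C := by
    have h1 : (1 : ℂ) ∈ puncturedFirstQuadrant := by
      simpa using ofReal_add_mul_I_mem_puncturedFirstQuadrant (x := 1) (y := 0) (by simp) le_rfl
        (by simp)
    simpa using (norm_nonneg _).trans (hbound 1 h1)
  refine (hbound w hw).trans ?_
  have hpow := Real.rpow_le_rpow_of_nonpos hr hrw (neg_nonpos.2 ha)
  gcongr

lemma QuadrantDecayBound.norm_apply_add_mul_I_le
    (hbound : QuadrantDecayBound f C a lam) (ha : 0 ≤ a) {c y : ℝ} (hc : 0 ≤ c) (hy : 0 < y) :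
    ‖f (c + y * I)‖ ≤ C * y ^ (-a) * Real.exp (-(lam * y)) := by
  have hy' : y ≤ ‖(c + y * I : ℂ)‖ := by simpa [abs_of_pos hy] using abs_im_le_norm (c + y * I : ℂ)
  simpa using hbound.norm_le_of_le_norm ha
    (ofReal_add_mul_I_mem_puncturedFirstQuadrant hc hy.le (Or.inr hy)) hy hy'

lemma integrableOn_rpow_neg_mul_exp_neg_mul (ha : a < 1) (hlam : 0 < lam) :
    IntegrableOn (fun y : ℝ => y ^ (-a) * Real.exp (-(lam * y))) (Ioi 0) := by
  refine IntegrableOn.congr_fun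
    (integrableOn_rpow_mul_exp_neg_mul_rpow (neg_lt_neg ha) one_pos hlam) (fun y _ => ?_)
    measurableSet_Ioi
  simp only [Real.rpow_one, neg_mul]

variable [NormedSpace ℂ E]

lemma integrableOn_apply_ofReal_add_mul_I (hf : DifferentiableOn ℂ f puncturedFirstQuadrant)
    (hbound : QuadrantDecayBound f C a lam) (ha₀ : 0 ≤ a) (ha₁ : a < 1) (hlam : 0 < lam)
    {c : ℝ} (hc : 0 ≤ c) :
    IntegrableOn (fun y : ℝ => f (c + y * I)) (Ioi 0) := by
  have hmem : ∀ y ∈ Ioi (0 : ℝ), (c + y * I : ℂ) ∈ puncturedFirstQuadrant := fun y hy =>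
    ofReal_add_mul_I_mem_puncturedFirstQuadrant hc (le_of_lt hy) (Or.inr hy)
  refine ((integrableOn_rpow_neg_mul_exp_neg_mul ha₁ hlam).const_mul C).mono' ?_ ?_
  · exact (hf.continuousOn.comp (by fun_prop) hmem).aestronglyMeasurable measurableSet_Ioi
  · filter_upwards [ae_restrict_mem measurableSet_Ioi] with y hy
    simpa [mul_assoc] using hbound.norm_apply_add_mul_I_le ha₀ hc hy

noncomputable def verticalIntegral (f : ℂ → E) (c : ℝ) : E := ∫ y in Ioi (0 : ℝ), f (c + y * I)

lemma tendsto_verticalIntegral_atTop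
    (hbound : QuadrantDecayBound f C a lam) (ha : 0 < a) (hlam : 0 < lam) :
    Tendsto (verticalIntegral f) atTop (𝓝 0) := by
  set K := ∫ y in Ioi (0 : ℝ), Real.exp (-(lam * y))
  have hK : IntegrableOn (fun y : ℝ => Real.exp (-(lam * y))) (Ioi 0) := by
    simpa only [neg_mul] using exp_neg_integrableOn_Ioi 0 hlam
  refine squeeze_zero_norm' (a := fun R => C * R ^ (-a) * K) ?_ ?_
  · filter_upwards [eventually_gt_atTop 0] with R hR
    have hbd : ∀ᵐ y : ℝ ∂volume.restrict (Ioi 0),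
        ‖f (R + y * I)‖ ≤ C * R ^ (-a) * Real.exp (-(lam * y)) := by
      filter_upwards [ae_restrict_mem measurableSet_Ioi] with y (hy : (0 : ℝ) < y)
      have hR' : R ≤ ‖(R + y * I : ℂ)‖ := by simpa [abs_of_pos hR] using re_le_norm (R + y * I : ℂ)
      simpa using hbound.norm_le_of_le_norm ha.le
        (ofReal_add_mul_I_mem_puncturedFirstQuadrant hR.le hy.le (Or.inl hR)) hR hR'
    simpa only [verticalIntegral, integral_const_mul] using
      norm_integral_le_of_norm_le (hK.const_mul _) hbd
  · simpa using ((tendsto_rpow_neg_atTop ha).const_mul C).mul_const K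

lemma tendsto_verticalIntegral_nhdsGT_zero (hf : DifferentiableOn ℂ f puncturedFirstQuadrant)
    (hbound : QuadrantDecayBound f C a lam) (ha₀ : 0 ≤ a) (ha₁ : a < 1) (hlam : 0 < lam) :
    Tendsto (verticalIntegral f) (𝓝[>] 0) (𝓝 (verticalIntegral f 0)) := by
  refine tendsto_integral_filter_of_dominated_convergence _ ?_ ?_
    ((integrableOn_rpow_neg_mul_exp_neg_mul ha₁ hlam).const_mul C) ?_
  · filter_upwards [self_mem_nhdsWithin] with c (hc : 0 < c)
    exact (integrableOn_apply_ofReal_add_mul_I hf hbound ha₀ ha₁ hlam hc.le).aestronglyMeasurable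
  · filter_upwards [self_mem_nhdsWithin] with c (hc : 0 < c)
    filter_upwards [ae_restrict_mem measurableSet_Ioi] with y hy
    simpa [mul_assoc] using hbound.norm_apply_add_mul_I_le ha₀ hc.le hy
  · filter_upwards [ae_restrict_mem measurableSet_Ioi] with y (hy : 0 < y)
    have hcont := hf.continuousOn (y * I) (by
      simpa using ofReal_add_mul_I_mem_puncturedFirstQuadrant le_rfl hy.le (Or.inr hy))
    refine (hcont.tendsto.comp (tendsto_nhdsWithin_iff.2 ⟨?_, ?_⟩)).trans_eq (by simp)
    · have : Tendsto (fun c : ℝ => (c + y * I : ℂ)) (𝓝 0) (𝓝 (y * I)) := by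
        have h : Continuous fun c : ℝ => (c + y * I : ℂ) := by fun_prop
        simpa using h.tendsto 0
      exact this.mono_left nhdsWithin_le_nhds
    · filter_upwards [self_mem_nhdsWithin] with c (hc : 0 < c)
      exact ofReal_add_mul_I_mem_puncturedFirstQuadrant hc.le hy.le (Or.inr hy)

lemma tendsto_intervalIntegral_add_mul_I_atTop
    (hbound : QuadrantDecayBound f C a lam) (ha : 0 ≤ a) (hlam : 0 < lam)
    {ε R : ℝ} (hε : 0 < ε) (hεR : ε ≤ R) :
    Tendsto (fun T : ℝ => ∫ x in ε..R, f (x + T * I)) atTop (𝓝 0) := by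
  refine squeeze_zero_norm' (a := fun T => C * ε ^ (-a) * Real.exp (-(lam * T)) * |R - ε|) ?_ ?_
  · filter_upwards [eventually_ge_atTop 0] with T hT
    refine intervalIntegral.norm_integral_le_of_norm_le_const fun x hx => ?_
    rw [uIoc_of_le hεR] at hx
    have hx0 : 0 < x := hε.trans_le hx.1.le
    have hεx : ε ≤ ‖(x + T * I : ℂ)‖ :=
      hx.1.le.trans (by simpa [abs_of_pos hx0] using re_le_norm (x + T * I : ℂ))
    simpa using hbound.norm_le_of_le_norm ha
      (ofReal_add_mul_I_mem_puncturedFirstQuadrant hx0.le hT (Or.inl hx0)) hε hεx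
  · have hexp : Tendsto (fun T : ℝ => Real.exp (-(lam * T))) atTop (𝓝 0) :=
      Real.tendsto_exp_neg_atTop_nhds_zero.comp (tendsto_id.const_mul_atTop hlam)
    simpa using (hexp.const_mul (C * ε ^ (-a))).mul_const |R - ε|

lemma intervalIntegral_eq_smul_verticalIntegral_sub
    (hf : DifferentiableOn ℂ f puncturedFirstQuadrant)
    (hbound : QuadrantDecayBound f C a lam) (ha₀ : 0 ≤ a) (ha₁ : a < 1) (hlam : 0 < lam)
    {ε R : ℝ} (hε : 0 < ε) (hεR : ε ≤ R) :
    ∫ x in ε..R, f x = I • verticalIntegral f ε - I • verticalIntegral f R := by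
  have hrect : ∀ T : ℝ, 0 ≤ T → (∫ x in ε..R, f x) - (∫ x in ε..R, f (x + T * I))
      + I • (∫ y in (0 : ℝ)..T, f (R + y * I)) - I • (∫ y in (0 : ℝ)..T, f (ε + y * I)) = 0 := by
    intro T hT
    have hsub : [[(ε : ℂ).re, (R + T * I : ℂ).re]] ×ℂ [[(ε : ℂ).im, (R + T * I : ℂ).im]] ⊆
        puncturedFirstQuadrant := by
      intro w hw
      have hw' : (ε ≤ w.re ∧ w.re ≤ R) ∧ 0 ≤ w.im ∧ w.im ≤ T := by
        simpa [mem_reProdIm, uIcc_of_le hεR, uIcc_of_le hT] using hw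
      have hre := hε.trans_le hw'.1.1
      simpa using ofReal_add_mul_I_mem_puncturedFirstQuadrant hre.le hw'.2.1 (Or.inl hre)
    simpa using integral_boundary_rect_eq_zero_of_differentiableOn f ε (R + T * I) (hf.mono hsub)
  have hvert : ∀ c : ℝ, 0 < c → Tendsto (fun T : ℝ => ∫ y in (0 : ℝ)..T, f (c + y * I)) atTop
      (𝓝 (verticalIntegral f c)) := fun c hc =>
    intervalIntegral_tendsto_integral_Ioi 0
      (integrableOn_apply_ofReal_add_mul_I hf hbound ha₀ ha₁ hlam hc.le) tendsto_id
  have hlim := (((tendsto_const_nhds (x := ∫ x in ε..R, f x)).sub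
    (tendsto_intervalIntegral_add_mul_I_atTop hbound ha₀ hlam hε hεR)).add
    ((hvert R (hε.trans_le hεR)).const_smul I)).sub ((hvert ε hε).const_smul I)
  have hzero := tendsto_nhds_unique hlim <| tendsto_const_nhds.congr' <|
    (eventually_ge_atTop 0).mono fun T hT => (hrect T hT).symm
  rw [← sub_eq_zero, ← hzero]
  abel

lemma intervalIntegral_zero_eq_smul_verticalIntegral_sub
    (hf : DifferentiableOn ℂ f puncturedFirstQuadrant) (hbound : QuadrantDecayBound f C a lam)
    (ha₀ : 0 ≤ a) (ha₁ : a < 1) (hlam : 0 < lam) (hint : IntegrableOn (fun x : ℝ => f x) (Ioi 0))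
    {R : ℝ} (hR : 0 < R) :
    ∫ x in (0 : ℝ)..R, f x = I • verticalIntegral f 0 - I • verticalIntegral f R := by
  have hintR : IntegrableOn (fun x : ℝ => f x) (uIcc 0 R) := by
    rw [uIcc_of_le hR.le, integrableOn_Icc_iff_integrableOn_Ioc]
    exact hint.mono_set Ioc_subset_Ioi_self
  have hleft : Tendsto (fun ε => ∫ x in ε..R, f x) (𝓝[>] 0) (𝓝 (∫ x in (0 : ℝ)..R, f x)) := by
    rw [← nhdsWithin_Ioo_eq_nhdsGT hR]
    exact ((intervalIntegral.continuousOn_primitive_interval_left hintR) 0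
      left_mem_uIcc).mono_left (nhdsWithin_mono _ (Ioo_subset_Icc_self.trans Icc_subset_uIcc))
  have hright := ((tendsto_verticalIntegral_nhdsGT_zero hf hbound ha₀ ha₁ hlam).const_smul I).sub
    (tendsto_const_nhds (x := I • verticalIntegral f R))
  refine tendsto_nhds_unique hleft (hright.congr' ?_)
  filter_upwards [Ioo_mem_nhdsGT hR] with ε hε
  exact (intervalIntegral_eq_smul_verticalIntegral_sub hf hbound ha₀ ha₁ hlam hε.1 hε.2.le).symm

theorem integral_Ioi_eq_I_smul_integral_Ioi_mul_I
    (hf : DifferentiableOn ℂ f puncturedFirstQuadrant) (hbound : QuadrantDecayBound f C a lam)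
    (ha₀ : 0 < a) (ha₁ : a < 1) (hlam : 0 < lam) (hint : IntegrableOn (fun x : ℝ => f x) (Ioi 0)) :
    ∫ x in Ioi (0 : ℝ), f x = I • ∫ y in Ioi (0 : ℝ), f (y * I) := by
  have hlim := (tendsto_const_nhds (x := I • verticalIntegral f 0)).sub
    ((tendsto_verticalIntegral_atTop hbound ha₀ hlam).const_smul I)
  rw [smul_zero, sub_zero] at hlim
  refine (tendsto_nhds_unique (intervalIntegral_tendsto_integral_Ioi 0 hint tendsto_id)
    (hlim.congr' ?_)).trans (by simp [verticalIntegral])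
  filter_upwards [eventually_gt_atTop 0] with R hR
  exact (intervalIntegral_zero_eq_smul_verticalIntegral_sub hf hbound ha₀.le ha₁ hlam hint hR).symm

end QuarterTurn

lemma Complex.re_cpow_ofReal_nonneg {w : ℂ} (hw : 0 ≤ w.re) {s : ℝ} (hs₀ : 0 ≤ s) (hs₁ : s ≤ 1) :
    0 ≤ (w ^ (s : ℂ)).re := by
  rw [cpow_ofReal_re]
  have harg := abs_le.1 (abs_arg_le_pi_div_two_iff.2 hw)
  refine mul_nonneg (Real.rpow_nonneg (norm_nonneg _) _) (Real.cos_nonneg_of_mem_Icc ⟨?_, ?_⟩)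
  · nlinarith [Real.pi_pos]
  · nlinarith [Real.pi_pos]

lemma Complex.one_le_norm_one_add {z : ℂ} (hz : 0 ≤ z.re) : 1 ≤ ‖1 + z‖ :=
  calc (1 : ℝ) ≤ (1 + z).re := by simp [hz]
    _ ≤ ‖1 + z‖ := re_le_norm _

lemma Complex.norm_inv_one_add_sub_one_le {z : ℂ} (hz : 0 ≤ z.re) : ‖(1 + z)⁻¹ - 1‖ ≤ ‖z‖ := by
  have h1 := one_le_norm_one_add hz
  have hne : 1 + z ≠ 0 := norm_pos_iff.1 (one_pos.trans_le h1)
  calc ‖(1 + z)⁻¹ - 1‖ = ‖z‖ / ‖1 + z‖ := by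
        rw [← norm_neg z, ← norm_div]
        congr 1
        field_simp
        ring
    _ ≤ ‖z‖ := div_le_self (norm_nonneg _) h1

/-- The integrand after the substitution `x = u³`, with the principal branch of `w ^ (2/3)`. -/
noncomputable def cubeSubstIntegrand (lam : ℝ) (w : ℂ) : ℂ :=
  Complex.exp (I * lam * w) / (3 * w ^ (2 / 3 : ℂ) * (1 + w ^ (2 / 3 : ℂ)))

lemma re_cpow_two_thirds_nonneg {w : ℂ} (hw : 0 ≤ w.re) : 0 ≤ (w ^ (2 / 3 : ℂ)).re := by
  simpa using re_cpow_ofReal_nonneg hw (s := 2 / 3) (by norm_num) (by norm_num)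

lemma differentiableOn_cubeSubstIntegrand (lam : ℝ) :
    DifferentiableOn ℂ (cubeSubstIntegrand lam) puncturedFirstQuadrant := by
  rintro w ⟨hw, hw0⟩
  rw [mem_reProdIm] at hw
  have hslit : w ∈ slitPlane := by
    rcases (show 0 ≤ w.re from hw.1).lt_or_eq with hre | hre
    · exact Or.inl hre
    · refine Or.inr fun him => hw0 (Complex.ext ?_ ?_) <;> simp [← hre, him]
  have hden : 3 * w ^ (2 / 3 : ℂ) * (1 + w ^ (2 / 3 : ℂ)) ≠ 0 :=
    mul_ne_zero (mul_ne_zero three_ne_zero (by simpa [cpow_eq_zero_iff] using hw0))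
      (norm_pos_iff.1 (one_pos.trans_le (one_le_norm_one_add (re_cpow_two_thirds_nonneg hw.1))))
  have hpow : DifferentiableAt ℂ (fun w : ℂ => w ^ (2 / 3 : ℂ)) w :=
    differentiableAt_id.cpow_const hslit
  exact ((by fun_prop : DifferentiableAt ℂ (fun w : ℂ => Complex.exp (I * lam * w)) w).div
    ((hpow.const_mul 3).mul (hpow.const_add 1)) hden).differentiableWithinAt

lemma quadrantDecayBound_cubeSubstIntegrand (lam : ℝ) :
    QuadrantDecayBound (cubeSubstIntegrand lam) 3⁻¹ (2 / 3) lam := by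
  rintro w ⟨hw, hw0⟩
  rw [mem_reProdIm] at hw
  have h1 := one_le_norm_one_add (re_cpow_two_thirds_nonneg hw.1)
  have hpos : 0 < ‖w‖ := norm_pos_iff.2 hw0
  have hnorm : ‖w ^ (2 / 3 : ℂ)‖ = ‖w‖ ^ (2 / 3 : ℝ) := by
    simpa using norm_cpow_real w (2 / 3)
  rw [cubeSubstIntegrand, norm_div, norm_mul, norm_mul, norm_exp, hnorm, Real.rpow_neg hpos.le]
  have hre : (I * lam * w).re = -(lam * w.im) := by simp
  rw [hre, div_eq_mul_inv, mul_comm]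
  gcongr
  rw [← mul_inv, Complex.norm_ofNat]
  exact inv_anti₀ (by positivity) (le_mul_of_one_le_right (by positivity) h1)

lemma rpow_three_smul_cubeSubstIntegrand (lam : ℝ) {u : ℝ} (hu : 0 < u) :
    (|(3 : ℝ)| * u ^ ((3 : ℝ) - 1)) • cubeSubstIntegrand lam ((u ^ (3 : ℝ) : ℝ) : ℂ) =
      Complex.exp (I * lam * u ^ 3) / (1 + (u : ℂ) ^ 2) := by
  have hpow : (((u ^ (3 : ℝ) : ℝ) : ℂ)) ^ (2 / 3 : ℂ) = (u : ℂ) ^ 2 := by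
    rw [show (2 / 3 : ℂ) = ((2 / 3 : ℝ) : ℂ) by push_cast; ring,
      ← ofReal_cpow (by positivity), ← Real.rpow_mul hu.le]
    norm_num
  have hu' : (u : ℂ) ≠ 0 := ofReal_ne_zero.2 hu.ne'
  have hden : 1 + (u : ℂ) ^ 2 ≠ 0 := by exact_mod_cast (by positivity : (1 + u ^ 2 : ℝ) ≠ 0)
  rw [cubeSubstIntegrand, hpow, real_smul]
  norm_num
  field_simp

lemma integrableOn_exp_mul_cube_div_one_add_sq (lam : ℝ) :
    IntegrableOn (fun u : ℝ => Complex.exp (I * lam * u ^ 3) / (1 + (u : ℂ) ^ 2)) (Ioi 0) := by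
  have hden (u : ℝ) : 1 + (u : ℂ) ^ 2 ≠ 0 := by exact_mod_cast (by positivity : (1 + u ^ 2 : ℝ) ≠ 0)
  have hcont : Continuous fun u : ℝ => Complex.exp (I * lam * u ^ 3) / (1 + (u : ℂ) ^ 2) :=
    Continuous.div (by fun_prop) (by fun_prop) hden
  refine integrable_inv_one_add_sq.integrableOn.mono' hcont.aestronglyMeasurable
    (ae_of_all _ fun u => ?_)
  have hexp : ‖Complex.exp (I * lam * u ^ 3)‖ = 1 := by
    rw [norm_exp]
    simp [← ofReal_pow]
  rw [norm_div, hexp, one_div, ← ofReal_pow, ← ofReal_one, ← ofReal_add, norm_real,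
    Real.norm_of_nonneg (by positivity)]

lemma integrableOn_cubeSubstIntegrand (lam : ℝ) :
    IntegrableOn (fun x : ℝ => cubeSubstIntegrand lam x) (Ioi 0) := by
  rw [← integrableOn_Ioi_comp_rpow_iff _ three_ne_zero]
  exact (integrableOn_exp_mul_cube_div_one_add_sq lam).congr_fun
    (fun u hu => (rpow_three_smul_cubeSubstIntegrand lam hu).symm) measurableSet_Ioi

lemma integral_exp_mul_cube_div_one_add_sq_eq_integral_cubeSubstIntegrand (lam : ℝ) :
    ∫ u in Ioi (0 : ℝ), Complex.exp (I * lam * u ^ 3) / (1 + (u : ℂ) ^ 2) =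
      ∫ x in Ioi (0 : ℝ), cubeSubstIntegrand lam x := by
  rw [← integral_comp_rpow_Ioi (fun x : ℝ => cubeSubstIntegrand lam x) three_ne_zero]
  exact setIntegral_congr_fun measurableSet_Ioi
    (fun u hu => (rpow_three_smul_cubeSubstIntegrand lam hu).symm)

lemma Complex.ofReal_mul_I_cpow {y : ℝ} (hy : 0 < y) (s : ℂ) :
    ((y : ℂ) * I) ^ s = (y : ℂ) ^ s * Complex.exp (I * π / 2 * s) := by
  have hy' : (y : ℂ) ≠ 0 := ofReal_ne_zero.2 hy.ne'
  rw [cpow_def_of_ne_zero (mul_ne_zero hy' I_ne_zero), cpow_def_of_ne_zero hy',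
    log_ofReal_mul hy I_ne_zero, log_I, ← Complex.exp_add, ofReal_log hy.le]
  ring_nf

lemma I_mul_cubeSubstIntegrand_ofReal_mul_I (lam : ℝ) {y : ℝ} (hy : 0 < y) :
    I * cubeSubstIntegrand lam (y * I) =
      Complex.exp (I * π / 6) / 3 * ((y ^ (-(2 / 3 : ℝ)) * Real.exp (-(lam * y)) : ℝ) : ℂ) *
        (1 + ((y ^ (2 / 3 : ℝ) : ℝ) : ℂ) * Complex.exp (I * π / 3))⁻¹ := by
  have hpow :
      ((y : ℂ) * I) ^ (2 / 3 : ℂ) = ((y ^ (2 / 3 : ℝ) : ℝ) : ℂ) * Complex.exp (I * π / 3) := by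
    rw [ofReal_mul_I_cpow hy, show (2 / 3 : ℂ) = ((2 / 3 : ℝ) : ℂ) by push_cast; ring,
      ← ofReal_cpow hy.le]
    push_cast
    ring_nf
  have hexp : Complex.exp (I * lam * (y * I)) = (Real.exp (-(lam * y)) : ℂ) := by
    rw [ofReal_exp]
    congr 1
    push_cast
    linear_combination (lam * y : ℂ) * I_sq
  have hI : I = Complex.exp (I * π / 6) * Complex.exp (I * π / 3) := by
    rw [← Complex.exp_add]
    conv_lhs => rw [← exp_pi_div_two_mul_I]
    ring_nf
  have hY : ((y ^ (2 / 3 : ℝ) : ℝ) : ℂ) ≠ 0 := ofReal_ne_zero.2 (by positivity)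
  rw [cubeSubstIntegrand, hpow, hexp, Real.rpow_neg hy.le, ofReal_mul, ofReal_inv]
  nth_rewrite 1 [hI]
  field_simp

lemma norm_I_mul_cubeSubstIntegrand_ofReal_mul_I_sub_le (lam : ℝ) {y : ℝ} (hy : 0 < y) :
    ‖I * cubeSubstIntegrand lam (y * I) -
        Complex.exp (I * π / 6) / 3 * ((y ^ (-(2 / 3 : ℝ)) * Real.exp (-(lam * y)) : ℝ) : ℂ)‖ ≤
      Real.exp (-(lam * y)) / 3 := by
  set z : ℂ := ((y ^ (2 / 3 : ℝ) : ℝ) : ℂ) * Complex.exp (I * π / 3)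
  have hz : ‖z‖ = y ^ (2 / 3 : ℝ) := by
    simp [z, norm_exp, Real.norm_of_nonneg (Real.rpow_nonneg hy.le _)]
  have hzre : 0 ≤ z.re := by
    have : (I * π / 3 : ℂ) = ((π / 3 : ℝ) : ℂ) * I := by push_cast; ring
    simp only [z, re_ofReal_mul, this, exp_ofReal_mul_I_re, Real.cos_pi_div_three]
    positivity
  have hc : ‖Complex.exp (I * π / 6) / 3‖ = 1 / 3 := by simp [norm_exp]
  rw [I_mul_cubeSubstIntegrand_ofReal_mul_I lam hy, ← mul_sub_one, norm_mul, norm_mul, hc,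
    norm_real, Real.norm_of_nonneg (by positivity)]
  calc 1 / 3 * (y ^ (-(2 / 3 : ℝ)) * Real.exp (-(lam * y))) * ‖(1 + z)⁻¹ - 1‖
      ≤ 1 / 3 * (y ^ (-(2 / 3 : ℝ)) * Real.exp (-(lam * y))) * y ^ (2 / 3 : ℝ) := by
        rw [← hz]; gcongr; exact norm_inv_one_add_sub_one_le hzre
    _ = Real.exp (-(lam * y)) / 3 := by
        rw [mul_comm (y ^ _), mul_assoc, mul_assoc, ← Real.rpow_add hy]; norm_num; ring

lemma integral_exp_mul_cube_div_one_add_sq_eq_integral_mul_I {lam : ℝ} (hlam : 0 < lam) :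
    ∫ u in Ioi (0 : ℝ), Complex.exp (I * lam * u ^ 3) / (1 + (u : ℂ) ^ 2) =
      ∫ y in Ioi (0 : ℝ), I * cubeSubstIntegrand lam (y * I) := by
  rw [integral_exp_mul_cube_div_one_add_sq_eq_integral_cubeSubstIntegrand, integral_const_mul,
    ← smul_eq_mul]
  exact integral_Ioi_eq_I_smul_integral_Ioi_mul_I (differentiableOn_cubeSubstIntegrand lam)
    (quadrantDecayBound_cubeSubstIntegrand lam) (by norm_num) (by norm_num) hlam
    (integrableOn_cubeSubstIntegrand lam)

lemma integrableOn_I_mul_cubeSubstIntegrand_mul_I {lam : ℝ} (hlam : 0 < lam) :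
    IntegrableOn (fun y : ℝ => I * cubeSubstIntegrand lam (y * I)) (Ioi 0) := by
  have h := integrableOn_apply_ofReal_add_mul_I (differentiableOn_cubeSubstIntegrand lam)
    (quadrantDecayBound_cubeSubstIntegrand lam) (by norm_num) (by norm_num) hlam le_rfl
  simp only [ofReal_zero, zero_add] at h
  exact h.const_mul I

lemma integral_leading_term {lam : ℝ} (hlam : 0 < lam) :
    ∫ y in Ioi (0 : ℝ),
        Complex.exp (I * π / 6) / 3 * ((y ^ (-(2 / 3 : ℝ)) * Real.exp (-(lam * y)) : ℝ) : ℂ) =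
      Complex.exp (I * π / 6) / (3 * (lam : ℂ) ^ ((1 : ℂ) / 3)) * Real.Gamma (1 / 3) := by
  have hGamma := Real.integral_rpow_mul_exp_neg_mul_Ioi (a := 1 / 3) (by norm_num) hlam
  rw [show (1 / 3 : ℝ) - 1 = -(2 / 3) by norm_num, Real.div_rpow zero_le_one hlam.le,
    Real.one_rpow] at hGamma
  rw [integral_const_mul, integral_complex_ofReal, hGamma,
    show ((1 : ℂ) / 3) = ((1 / 3 : ℝ) : ℂ) by push_cast; ring, ← ofReal_cpow hlam.le]
  push_cast
  ring

theorem oscillatory_integral_asymptotic (lam : ℝ) (hlam : 0 < lam) :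
    ∃ R : ℂ,
      (∫ u in Set.Ioi (0:ℝ), Complex.exp (Complex.I * lam * u ^ 3) / (1 + (u:ℂ) ^ 2)) =
        Complex.exp (Complex.I * π / 6) / (3 * (lam : ℂ) ^ ((1:ℂ)/3)) * Real.Gamma (1/3) + R ∧
      ‖R‖ ≤ 1 / (3 * lam) := by
  refine ⟨_, (add_sub_cancel _ _).symm, ?_⟩
  rw [integral_exp_mul_cube_div_one_add_sq_eq_integral_mul_I hlam, ← integral_leading_term hlam,
    ← integral_sub (integrableOn_I_mul_cubeSubstIntegrand_mul_I hlam) ?_]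
  · calc _ ≤ ∫ y in Ioi (0 : ℝ), Real.exp (-(lam * y)) / 3 :=
          norm_integral_le_of_norm_le
            (by simpa only [neg_mul] using (exp_neg_integrableOn_Ioi 0 hlam).div_const 3)
            ((ae_restrict_mem measurableSet_Ioi).mono fun y hy =>
              norm_I_mul_cubeSubstIntegrand_ofReal_mul_I_sub_le lam hy)
      _ = 1 / (3 * lam) := by
          simp_rw [← neg_mul]
          rw [integral_div, integral_exp_mul_Ioi (neg_lt_zero.2 hlam)]
          field_simp
          simp
  · exact (integrableOn_rpow_neg_mul_exp_neg_mul (by norm_num) hlam).ofReal.const_mul _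
end

section
/- The Good functions satisfy the relation Q_{γ,ξ}(x) = √(1+ρ²) · G_{γ,ρ}(x) + (1/2)(G_{γ+1,ρ}(x) + G_{γ−1,ρ}(x)) for all x ∈ ℝ, where ρ = √(ξ² − 1) and ξ > 1. -/
open Real

theorem good_functions_relation (γ ξ x : ℝ) (hγ : 0 ≤ γ) (hξ : 1 < ξ) :
    (1 / π) * ∫ θ in (0:ℝ)..π, Real.cos (γ * θ + x * Real.sin θ) / (ξ - Real.cos θ) =
      Real.sqrt (1 + Real.sqrt (ξ ^ 2 - 1) ^ 2) *
        ((1 / π) * ∫ θ in (0:ℝ)..π,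
          Real.cos (γ * θ + x * Real.sin θ) / (Real.sqrt (ξ ^ 2 - 1) ^ 2 + Real.sin θ ^ 2)) +
      (1 / 2) *
        (((1 / π) * ∫ θ in (0:ℝ)..π,
            Real.cos ((γ + 1) * θ + x * Real.sin θ) / (Real.sqrt (ξ ^ 2 - 1) ^ 2 + Real.sin θ ^ 2)) +
          ((1 / π) * ∫ θ in (0:ℝ)..π,
            Real.cos ((γ - 1) * θ + x * Real.sin θ) / (Real.sqrt (ξ ^ 2 - 1) ^ 2 + Real.sin θ ^ 2))) := by
  have hρ : Real.sqrt (ξ ^ 2 - 1) ^ 2 = ξ ^ 2 - 1 := Real.sq_sqrt (by nlinarith)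
  have hξ0 : (0:ℝ) < ξ := lt_trans one_pos hξ
  have h1 : Real.sqrt (1 + Real.sqrt (ξ ^ 2 - 1) ^ 2) = ξ := by
    rw [hρ, show 1 + (ξ ^ 2 - 1) = ξ ^ 2 by ring, Real.sqrt_sq hξ0.le]
  rw [h1, hρ]
  -- denominators are nonzero
  have hDm : ∀ θ : ℝ, ξ - Real.cos θ ≠ 0 := fun θ => by
    have := Real.cos_le_one θ; intro h; linarith
  have hDp : ∀ θ : ℝ, ξ + Real.cos θ ≠ 0 := fun θ => by
    have := Real.neg_one_le_cos θ; intro h; linarith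
  have hD : ∀ θ : ℝ, ξ ^ 2 - 1 + Real.sin θ ^ 2 ≠ 0 := fun θ => by
    have := sq_nonneg (Real.sin θ); intro h; nlinarith
  -- continuity / integrability of the G-integrands
  have hcont : ∀ a : ℝ, Continuous fun θ : ℝ =>
      Real.cos (a * θ + x * Real.sin θ) / (ξ ^ 2 - 1 + Real.sin θ ^ 2) := by
    intro a
    exact (Real.continuous_cos.comp (by continuity)).div (by continuity) hD
  have hint : ∀ a : ℝ, IntervalIntegrable
      (fun θ : ℝ => Real.cos (a * θ + x * Real.sin θ) / (ξ ^ 2 - 1 + Real.sin θ ^ 2))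
      MeasureTheory.volume 0 π := fun a => (hcont a).intervalIntegrable _ _
  -- pointwise identity
  have key : ∀ θ : ℝ,
      Real.cos (γ * θ + x * Real.sin θ) / (ξ - Real.cos θ) =
        ξ * (Real.cos (γ * θ + x * Real.sin θ) / (ξ ^ 2 - 1 + Real.sin θ ^ 2)) +
        ((1 / 2) * (Real.cos ((γ + 1) * θ + x * Real.sin θ) / (ξ ^ 2 - 1 + Real.sin θ ^ 2)) +
         (1 / 2) * (Real.cos ((γ - 1) * θ + x * Real.sin θ) / (ξ ^ 2 - 1 + Real.sin θ ^ 2))) := by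
    intro θ
    have pyth := Real.sin_sq_add_cos_sq θ
    have hs : Real.sin θ ^ 2 = 1 - Real.cos θ ^ 2 := by linarith
    have e1 : (γ + 1) * θ + x * Real.sin θ = (γ * θ + x * Real.sin θ) + θ := by ring
    have e2 : (γ - 1) * θ + x * Real.sin θ = (γ * θ + x * Real.sin θ) - θ := by ring
    have h2 : ξ ^ 2 - 1 + (1 - Real.cos θ ^ 2) = (ξ - Real.cos θ) * (ξ + Real.cos θ) := by ring
    have expand : Real.cos ((γ * θ + x * Real.sin θ) + θ) +
        Real.cos ((γ * θ + x * Real.sin θ) - θ) =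
        2 * Real.cos θ * Real.cos (γ * θ + x * Real.sin θ) := by
      rw [Real.cos_add, Real.cos_sub]; ring
    rw [e1, e2, hs, h2]
    rw [show ξ * (Real.cos (γ * θ + x * Real.sin θ) /
          ((ξ - Real.cos θ) * (ξ + Real.cos θ))) +
        ((1 / 2) * (Real.cos ((γ * θ + x * Real.sin θ) + θ) /
          ((ξ - Real.cos θ) * (ξ + Real.cos θ))) +
         (1 / 2) * (Real.cos ((γ * θ + x * Real.sin θ) - θ) /
          ((ξ - Real.cos θ) * (ξ + Real.cos θ)))) =
        (ξ * Real.cos (γ * θ + x * Real.sin θ) +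
          (1 / 2) * (Real.cos ((γ * θ + x * Real.sin θ) + θ) +
            Real.cos ((γ * θ + x * Real.sin θ) - θ))) /
          ((ξ - Real.cos θ) * (ξ + Real.cos θ)) from by ring, expand]
    rw [div_eq_div_iff (hDm θ) (mul_ne_zero (hDm θ) (hDp θ))]
    ring
  rw [intervalIntegral.integral_congr (g := fun θ =>
      ξ * (Real.cos (γ * θ + x * Real.sin θ) / (ξ ^ 2 - 1 + Real.sin θ ^ 2)) +
        ((1 / 2) * (Real.cos ((γ + 1) * θ + x * Real.sin θ) / (ξ ^ 2 - 1 + Real.sin θ ^ 2)) +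
         (1 / 2) * (Real.cos ((γ - 1) * θ + x * Real.sin θ) / (ξ ^ 2 - 1 + Real.sin θ ^ 2))))
      (fun θ _ => key θ)]
  rw [intervalIntegral.integral_add ((hint γ).const_mul ξ)
      (((hint (γ + 1)).const_mul _).add ((hint (γ - 1)).const_mul _)),
    intervalIntegral.integral_add ((hint (γ + 1)).const_mul _) ((hint (γ - 1)).const_mul _),
    intervalIntegral.integral_const_mul, intervalIntegral.integral_const_mul,
    intervalIntegral.integral_const_mul]
  ring
end

section
/- The Good function satisfies the differential equation d²/dx² G_{γ,ρ}(x) − ρ² G_{γ,ρ}(x) = −𝕁_γ(−x) for all x ∈ ℝ, where 𝕁_γ is the Anger function. -/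
/-!
Differentiating twice under the integral sign multiplies the integrand by `-sin² θ`; subtracting
`ρ²` times the integrand then cancels the denominator `ρ² + sin² θ`, leaving `-cos (γθ + x sin θ)`,
which is the integrand of `-𝕁_γ(-x)`.
-/

open Real intervalIntegral Set

section ParametricCos

variable {f f' φ s w : ℝ → ℝ} {C : ℝ} {a b : ℝ}

theorem hasDerivAt_intervalIntegral_comp_add_mul (hf : ∀ t, HasDerivAt f (f' t) t)
    (hf' : Continuous f') (hf'_bound : ∀ t, |f' t| ≤ C)
    (hφ : Continuous φ) (hs : Continuous s) (hw : Continuous w) (y : ℝ) :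
    HasDerivAt (fun y => ∫ θ in a..b, f (φ θ + y * s θ) * w θ)
      (∫ θ in a..b, f' (φ θ + y * s θ) * (s θ * w θ)) y := by
  have hf_cont : Continuous f := continuous_iff_continuousAt.2 fun t => (hf t).continuousAt
  obtain ⟨K, hK⟩ :=
    (isCompact_uIcc (a := a) (b := b)).exists_bound_of_continuousOn (hs.mul hw).continuousOn
  have h_bound : ∀ θ ∈ uIoc a b, ∀ z ∈ (univ : Set ℝ),
      ‖f' (φ θ + z * s θ) * (s θ * w θ)‖ ≤ C * K := fun θ hθ z _ => by
    rw [norm_mul]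
    exact mul_le_mul (hf'_bound _) (hK θ (uIoc_subset_uIcc hθ)) (norm_nonneg _)
      ((abs_nonneg _).trans (hf'_bound 0))
  have h_diff : ∀ θ z, HasDerivAt (fun y => f (φ θ + y * s θ) * w θ)
      (f' (φ θ + z * s θ) * (s θ * w θ)) z := fun θ z => by
    have := ((hf _).comp z (((hasDerivAt_id z).mul_const (s θ)).const_add (φ θ))).mul_const (w θ)
    simpa [mul_assoc] using this
  exact (hasDerivAt_integral_of_dominated_loc_of_deriv_le Filter.univ_mem
    (.of_forall fun z => (by fun_prop : Continuous _).aestronglyMeasurable)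
    ((by fun_prop : Continuous _).intervalIntegrable _ _)
    (by fun_prop : Continuous _).aestronglyMeasurable
    (.of_forall fun θ hθ z hz => h_bound θ hθ z hz) intervalIntegrable_const
    (.of_forall fun θ _ z _ => h_diff θ z)).2

theorem iteratedDeriv_two_intervalIntegral_cos_add_mul
    (hφ : Continuous φ) (hs : Continuous s) (hw : Continuous w) (y : ℝ) :
    iteratedDeriv 2 (fun y => ∫ θ in a..b, cos (φ θ + y * s θ) * w θ) y =
      ∫ θ in a..b, -cos (φ θ + y * s θ) * (s θ * (s θ * w θ)) := by
  have h_cos := hasDerivAt_intervalIntegral_comp_add_mul (a := a) (b := b) hasDerivAt_cos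
    continuous_sin.neg (fun t => by simpa using abs_sin_le_one t) hφ hs hw
  have h_sin := hasDerivAt_intervalIntegral_comp_add_mul (a := a) (b := b)
    (fun t => (hasDerivAt_sin t).neg) continuous_cos.neg (fun t => by simpa using abs_cos_le_one t)
    hφ hs (hs.mul hw) y
  rw [iteratedDeriv_succ, iteratedDeriv_one, funext fun z => (h_cos z).deriv]
  exact h_sin.deriv

end ParametricCos

theorem good_ode_general (γ ρ x : ℝ) (hρ : 0 < ρ) :
    iteratedDeriv 2 (fun y : ℝ =>
        (1 / π) * ∫ θ in (0:ℝ)..π, Real.cos (γ * θ + y * Real.sin θ) / (ρ ^ 2 + Real.sin θ ^ 2)) x -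
      ρ ^ 2 * ((1 / π) * ∫ θ in (0:ℝ)..π,
        Real.cos (γ * θ + x * Real.sin θ) / (ρ ^ 2 + Real.sin θ ^ 2)) =
      -((1 / π) * ∫ θ in (0:ℝ)..π, Real.cos (γ * θ - (-x) * Real.sin θ)) := by
  have hden : ∀ θ, ρ ^ 2 + sin θ ^ 2 ≠ 0 := fun θ => by positivity
  have hw : Continuous fun θ => (ρ ^ 2 + sin θ ^ 2)⁻¹ := (by fun_prop : Continuous _).inv₀ hden
  simp only [div_eq_mul_inv]
  rw [iteratedDeriv_const_mul_field,
    iteratedDeriv_two_intervalIntegral_cos_add_mul (by fun_prop) continuous_sin hw]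
  have h_ode : (∫ θ in (0:ℝ)..π,
        -cos (γ * θ + x * sin θ) * (sin θ * (sin θ * (ρ ^ 2 + sin θ ^ 2)⁻¹))) -
      ρ ^ 2 * ∫ θ in (0:ℝ)..π, cos (γ * θ + x * sin θ) * (ρ ^ 2 + sin θ ^ 2)⁻¹ =
      -∫ θ in (0:ℝ)..π, cos (γ * θ - (-x) * sin θ) := by
    rw [← integral_const_mul, ← integral_sub ((by fun_prop : Continuous _).intervalIntegrable _ _)
      ((by fun_prop : Continuous _).intervalIntegrable _ _), ← integral_neg]
    refine integral_congr fun θ _ => ?_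
    rw [neg_mul x, sub_neg_eq_add]
    field_simp [hden θ]
    ring
  linear_combination (1 / π) * h_ode

theorem good_ode (γ ρ x : ℝ) (hγ : 0 ≤ γ) (hρ : 0 < ρ) :
    iteratedDeriv 2 (fun y : ℝ =>
        (1 / π) * ∫ θ in (0:ℝ)..π, Real.cos (γ * θ + y * Real.sin θ) / (ρ ^ 2 + Real.sin θ ^ 2)) x -
      ρ ^ 2 * ((1 / π) * ∫ θ in (0:ℝ)..π,
        Real.cos (γ * θ + x * Real.sin θ) / (ρ ^ 2 + Real.sin θ ^ 2)) =
      -((1 / π) * ∫ θ in (0:ℝ)..π, Real.cos (γ * θ - (-x) * Real.sin θ)) :=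
  good_ode_general γ ρ x hρ
end
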